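/- arXiv:2211.01122 — 7 statements merged into one kernel-verified Lean document; each statement's English description precedes it below -/
import Mathlib

section
/- Suppose each g^m satisfies: ∇²_{yy} g^m(x,y) ⪰ μ I_p, ||∇²_{xy} g^m(x,y)|| ≤ C_{gxy}, ∇²_{xy} g^m is L_{gxy}-Lipschitz continuous, and ∇²_{yy} g^m is L_{gyy}-Lipschitz continuous (jointly in (x,y)). Then the Jacobian of the minimizer mapping, ∇y*(x), is L_y-Lipschitz continuous with L_y = (C_{gxy} L_{gyy}/μ² + L_{gxy}/μ)(1 + C_{gxy}/μ), i.e., ||∇y*(x_1) - ∇y*(x_2)|| ≤ L_y ||x_1 - x_2|| for all x_1, x_2. -/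
/-!
Differentiating the optimality condition `∑ₘ ∇_y gᵐ(x, y*(x)) = 0` gives
`A(x) + B(x) ∘ ∇y*(x) = 0`, where `A` and `B` are the sums of `∇²_{xy} gᵐ` and `∇²_{yy} gᵐ` at
`(x, y*(x))`. Strong convexity gives `‖B(x) w‖ ≥ Mμ‖w‖`, hence `‖∇y*‖ ≤ C_{gxy}/μ`, and `y*` is
`(C_{gxy}/μ)`-Lipschitz by the mean value inequality. Subtracting the identity at two points,
`B(x₁)(∇y*(x₁) - ∇y*(x₂)) = (A(x₂) - A(x₁)) + (B(x₂) - B(x₁)) ∘ ∇y*(x₂)`, and the joint distance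
between `(x₁, y*(x₁))` and `(x₂, y*(x₂))` is at most `(1 + C_{gxy}/μ)‖x₁ - x₂‖`.
-/

open Set InnerProductSpace

section Coercive

variable {F : Type*} [NormedAddCommGroup F] [InnerProductSpace ℝ F]

theorem StrongConvexOn.mul_norm_sq_le_inner_of_hasFDerivAt_gradient [CompleteSpace F]
    {f : F → ℝ} {μ : ℝ} {y : F} {B : F →L[ℝ] F} (hf : Differentiable ℝ f)
    (hsc : StrongConvexOn univ μ f) (hB : HasFDerivAt (gradient f) B y) (v : F) :
    μ * ‖v‖ ^ 2 ≤ inner ℝ (B v) v := by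
  -- `f - μ/2 ‖·‖²` is convex along the line `t ↦ t • v + y`, so its second derivative at
  -- `t = 0`, namely `⟪B v, v⟫ - μ ‖v‖²`, is nonnegative.
  have hline : ∀ t : ℝ, HasDerivAt (fun t : ℝ => t • v + y) v t := fun t => by
    simpa using ((hasDerivAt_id t).smul_const v).add_const y
  set φ : ℝ → ℝ := fun t => f (t • v + y) - μ / 2 * ‖t • v + y‖ ^ 2
  set ψ : ℝ → ℝ := fun t => inner ℝ (gradient f (t • v + y)) v - μ * inner ℝ (t • v + y) v
  have hφ : ∀ t, HasDerivAt φ (ψ t) t := fun t => by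
    refine (((hf _).hasFDerivAt.comp_hasDerivAt t (hline t)).sub
      (((hline t).norm_sq).const_mul (μ / 2))).congr_deriv ?_
    rw [← inner_gradient_left]
    ring
  have hφ_convex : ConvexOn ℝ univ φ := by
    have h := (strongConvexOn_iff_convex.mp hsc).comp_affineMap (AffineMap.lineMap y (v + y))
    simpa [φ, Function.comp_def, AffineMap.lineMap_apply_module'] using h
  have hψ_mono : Monotone ψ := by
    have h := hφ_convex.monotoneOn_deriv fun t _ => (hφ t).differentiableAt
    simpa [funext fun t => (hφ t).deriv] using h
  have hψ : HasDerivAt ψ (inner ℝ (B v) v - μ * ‖v‖ ^ 2) 0 := by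
    have hB' : HasFDerivAt (gradient f) B ((0 : ℝ) • v + y) := by simpa using hB
    refine (((hB'.comp_hasDerivAt 0 (hline 0)).inner ℝ (hasDerivAt_const 0 v)).sub
      (((hline 0).inner ℝ (hasDerivAt_const 0 v)).const_mul μ)).congr_deriv ?_
    simp
  linarith [hψ.nonneg_of_monotone hψ_mono]

theorem ContinuousLinearMap.mul_norm_le_norm_apply_of_mul_norm_sq_le_inner {B : F →L[ℝ] F}
    {c : ℝ} {w : F} (h : c * ‖w‖ ^ 2 ≤ inner ℝ (B w) w) : c * ‖w‖ ≤ ‖B w‖ := by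
  rcases (norm_nonneg w).eq_or_lt with hw | hw
  · rw [← hw, mul_zero]
    exact norm_nonneg _
  · refine le_of_mul_le_mul_right ?_ hw
    calc c * ‖w‖ * ‖w‖ = c * ‖w‖ ^ 2 := by ring
      _ ≤ ‖B w‖ * ‖w‖ := h.trans (real_inner_le_norm _ _)

theorem StrongConvexOn.card_mul_mul_norm_le_norm_sum_apply [CompleteSpace F] {ι : Type*}
    [Fintype ι] {f : ι → F → ℝ} {μ : ℝ} {y : F} {B : ι → F →L[ℝ] F}
    (hf : ∀ i, Differentiable ℝ (f i)) (hsc : ∀ i, StrongConvexOn univ μ (f i))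
    (hB : ∀ i, HasFDerivAt (gradient (f i)) (B i) y) (w : F) :
    Fintype.card ι * μ * ‖w‖ ≤ ‖(∑ i, B i) w‖ := by
  refine ContinuousLinearMap.mul_norm_le_norm_apply_of_mul_norm_sq_le_inner ?_
  calc Fintype.card ι * μ * ‖w‖ ^ 2 = ∑ _i : ι, μ * ‖w‖ ^ 2 := by simp [mul_assoc]
    _ ≤ ∑ i, inner ℝ (B i w) w := Finset.sum_le_sum fun i _ =>
        (hsc i).mul_norm_sq_le_inner_of_hasFDerivAt_gradient (hf i) (hB i) w
    _ = inner ℝ ((∑ i, B i) w) w := by simp [sum_inner]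

end Coercive

section Perturbation

variable {E F F' : Type*} [NormedAddCommGroup E] [NormedSpace ℝ E]
  [NormedAddCommGroup F] [NormedSpace ℝ F] [NormedAddCommGroup F'] [NormedSpace ℝ F']

theorem ContinuousLinearMap.opNorm_le_norm_comp_div {B : F →L[ℝ] F'} {c : ℝ} (hc : 0 < c)
    (hB : ∀ w, c * ‖w‖ ≤ ‖B w‖) (T : E →L[ℝ] F) : ‖T‖ ≤ ‖B.comp T‖ / c := by
  refine T.opNorm_le_bound (by positivity) fun u => ?_
  rw [div_mul_eq_mul_div, le_div_iff₀ hc, mul_comm]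
  exact (hB (T u)).trans ((B.comp T).le_opNorm u)

theorem ContinuousLinearMap.norm_sub_le_of_add_comp_eq_zero {A₁ A₂ : E →L[ℝ] F'}
    {B₁ B₂ : F →L[ℝ] F'} {J₁ J₂ : E →L[ℝ] F} {c : ℝ} (hc : 0 < c) (hB₁ : ∀ w, c * ‖w‖ ≤ ‖B₁ w‖)
    (h₁ : A₁ + B₁.comp J₁ = 0) (h₂ : A₂ + B₂.comp J₂ = 0) :
    ‖J₁ - J₂‖ ≤ (‖A₁ - A₂‖ + ‖B₁ - B₂‖ * ‖J₂‖) / c := by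
  have hcomp : B₁.comp (J₁ - J₂) = (A₂ - A₁) + (B₂ - B₁).comp J₂ := by
    rw [comp_sub, sub_comp, eq_neg_of_add_eq_zero_right h₁, eq_neg_of_add_eq_zero_right h₂]
    abel
  refine (opNorm_le_norm_comp_div hc hB₁ _).trans ?_
  rw [hcomp, norm_sub_rev A₁, norm_sub_rev B₁]
  gcongr
  exact (norm_add_le _ _).trans (add_le_add le_rfl (opNorm_comp_le _ _))

end Perturbation

section Implicit

variable {E F : Type*} [NormedAddCommGroup E] [NormedSpace ℝ E]
  [NormedAddCommGroup F] [NormedSpace ℝ F]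

theorem norm_fderiv_sub_fderiv_le_of_add_comp_eq_zero {A : E → E →L[ℝ] F} {B : E → F →L[ℝ] F}
    {y : E → F} {c C La Lb : ℝ} (hc : 0 < c) (hLa : 0 ≤ La) (hLb : 0 ≤ Lb)
    (hy : Differentiable ℝ y) (hAB : ∀ x, A x + (B x).comp (fderiv ℝ y x) = 0)
    (hB : ∀ x w, c * ‖w‖ ≤ ‖B x w‖) (hA : ∀ x, ‖A x‖ ≤ C)
    (hA_lip : ∀ x₁ x₂, ‖A x₁ - A x₂‖ ≤ La * √(‖x₁ - x₂‖ ^ 2 + ‖y x₁ - y x₂‖ ^ 2))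
    (hB_lip : ∀ x₁ x₂, ‖B x₁ - B x₂‖ ≤ Lb * √(‖x₁ - x₂‖ ^ 2 + ‖y x₁ - y x₂‖ ^ 2))
    (x₁ x₂ : E) :
    ‖fderiv ℝ y x₁ - fderiv ℝ y x₂‖ ≤ (C * Lb / c ^ 2 + La / c) * (1 + C / c) * ‖x₁ - x₂‖ := by
  have hJ : ∀ x, ‖fderiv ℝ y x‖ ≤ C / c := fun x => by
    refine ((B x).opNorm_le_norm_comp_div hc (hB x) _).trans ?_
    rw [eq_neg_of_add_eq_zero_right (hAB x), norm_neg]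
    gcongr
    exact hA x
  have hC : 0 ≤ C := (norm_nonneg _).trans (hA x₁)
  have hy_lip : ‖y x₁ - y x₂‖ ≤ C / c * ‖x₁ - x₂‖ :=
    convex_univ.norm_image_sub_le_of_norm_fderiv_le (fun x _ => hy x) (fun x _ => hJ x)
      (mem_univ x₂) (mem_univ x₁)
  set s := √(‖x₁ - x₂‖ ^ 2 + ‖y x₁ - y x₂‖ ^ 2)
  have hs : s ≤ (1 + C / c) * ‖x₁ - x₂‖ := by
    refine Real.sqrt_le_iff.2 ⟨by positivity, ?_⟩
    nlinarith [norm_nonneg (x₁ - x₂), norm_nonneg (y x₁ - y x₂)]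
  calc ‖fderiv ℝ y x₁ - fderiv ℝ y x₂‖
      ≤ (‖A x₁ - A x₂‖ + ‖B x₁ - B x₂‖ * ‖fderiv ℝ y x₂‖) / c :=
        ContinuousLinearMap.norm_sub_le_of_add_comp_eq_zero hc (hB x₁) (hAB x₁) (hAB x₂)
    _ ≤ (La * s + Lb * s * (C / c)) / c := by
        gcongr
        exacts [hA_lip x₁ x₂, hB_lip x₁ x₂, hJ x₂]
    _ = (C * Lb / c ^ 2 + La / c) * s := by
        field_simp
        ring
    _ ≤ (C * Lb / c ^ 2 + La / c) * ((1 + C / c) * ‖x₁ - x₂‖) := by gcongr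
    _ = (C * Lb / c ^ 2 + La / c) * (1 + C / c) * ‖x₁ - x₂‖ := by ring

end Implicit

section Calculus

variable {E F G : Type*} [NormedAddCommGroup E] [NormedSpace ℝ E]
  [NormedAddCommGroup F] [NormedSpace ℝ F] [NormedAddCommGroup G] [NormedSpace ℝ G]

theorem DifferentiableAt.hasFDerivAt_comp_graph {Φ : E × F → G} {y : E → F} {x : E}
    (hΦ : DifferentiableAt ℝ Φ (x, y x)) (hy : DifferentiableAt ℝ y x) :
    HasFDerivAt (fun x' => Φ (x', y x'))
      (fderiv ℝ (fun x' => Φ (x', y x)) x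
        + (fderiv ℝ (fun y' => Φ (x, y')) (y x)).comp (fderiv ℝ y x)) x := by
  set D := fderiv ℝ Φ (x, y x)
  have hD : HasFDerivAt Φ D (x, y x) := hΦ.hasFDerivAt
  have hx : HasFDerivAt (fun x' => Φ (x', y x)) (D.comp (.inl ℝ E F)) x :=
    hD.comp x (hasFDerivAt_prodMk_left x (y x))
  have hy' : HasFDerivAt (fun y' => Φ (x, y')) (D.comp (.inr ℝ E F)) (y x) :=
    hD.comp (y x) (hasFDerivAt_prodMk_right x (y x))
  rw [hx.fderiv, hy'.fderiv]
  refine (hD.comp x ((hasFDerivAt_id x).prodMk hy.hasFDerivAt)).congr_fderiv ?_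
  ext u
  simp [← map_add]

theorem sum_fderiv_add_comp_eq_zero_of_sum_eq_zero {ι : Type*} (s : Finset ι)
    {Φ : ι → E × F → G} {y : E → F} {x : E}
    (hΦ : ∀ i ∈ s, DifferentiableAt ℝ (Φ i) (x, y x)) (hy : DifferentiableAt ℝ y x)
    (hzero : ∀ x', ∑ i ∈ s, Φ i (x', y x') = 0) :
    ∑ i ∈ s, fderiv ℝ (fun x' => Φ i (x', y x)) x
      + (∑ i ∈ s, fderiv ℝ (fun y' => Φ i (x, y')) (y x)).comp (fderiv ℝ y x) = 0 := by
  have hsum := HasFDerivAt.fun_sum fun i hi => (hΦ i hi).hasFDerivAt_comp_graph hy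
  have hconst : HasFDerivAt (fun x' => ∑ i ∈ s, Φ i (x', y x')) (0 : E →L[ℝ] G) x := by
    simpa only [hzero] using hasFDerivAt_const (0 : G) x
  rw [ContinuousLinearMap.finsetSum_comp, ← Finset.sum_add_distrib]
  exact hsum.unique hconst

end Calculus

section Gradient

variable {E F : Type*} [NormedAddCommGroup E] [NormedSpace ℝ E]
  [NormedAddCommGroup F] [InnerProductSpace ℝ F] [CompleteSpace F]

theorem ContDiff.differentiable_gradient_right {f : E → F → ℝ}
    (hf : ContDiff ℝ 2 fun q : E × F => f q.1 q.2) :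
    Differentiable ℝ fun q : E × F => gradient (fun y => f q.1 y) q.2 := by
  have hfderiv : ContDiff ℝ 1 fun q : E × F => fderiv ℝ (fun y => f q.1 y) q.2 :=
    ContDiff.fderiv (f := fun q y => f q.1 y)
      (hf.comp (contDiff_fst.fst.prodMk contDiff_snd)) contDiff_snd (by norm_num)
  exact (toDual ℝ F).symm.differentiable.comp (hfderiv.differentiable one_ne_zero)

theorem sum_gradient_eq_zero_of_isLocalMin {ι : Type*} (s : Finset ι) {f : ι → F → ℝ} {y : F}
    (hf : ∀ i ∈ s, DifferentiableAt ℝ (f i) y) (hmin : IsLocalMin (fun y => ∑ i ∈ s, f i y) y) :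
    ∑ i ∈ s, gradient (f i) y = 0 := by
  have h := hmin.fderiv_eq_zero
  rw [fderiv_fun_sum hf] at h
  simp only [gradient, ← map_sum, h, map_zero]

end Gradient

theorem norm_sum_le_card_mul {ι E : Type*} [Fintype ι] [SeminormedAddCommGroup E] {f : ι → E}
    {C : ℝ} (h : ∀ i, ‖f i‖ ≤ C) : ‖∑ i, f i‖ ≤ Fintype.card ι * C :=
  (norm_sum_le_of_le _ fun i _ => h i).trans (by simp)

theorem ystar_jacobian_lipschitz_general (d p M : ℕ) (hM : 0 < M)
    (μ Cgxy Lgxy Lgyy : ℝ) (hμ : 0 < μ) (hLxy : 0 ≤ Lgxy) (hLyy : 0 ≤ Lgyy)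
    (g : Fin M → EuclideanSpace ℝ (Fin d) → EuclideanSpace ℝ (Fin p) → ℝ)
    (hg : ∀ m, ContDiff ℝ 2
      (fun q : EuclideanSpace ℝ (Fin d) × EuclideanSpace ℝ (Fin p) => g m q.1 q.2))
    (hsc : ∀ m x, StrongConvexOn Set.univ μ (fun y => g m x y))
    (Hxy : Fin M → EuclideanSpace ℝ (Fin d) → EuclideanSpace ℝ (Fin p) →
      (EuclideanSpace ℝ (Fin d) →L[ℝ] EuclideanSpace ℝ (Fin p)))
    (hHxy : ∀ m x y, Hxy m x y =
      fderiv ℝ (fun x' => gradient (fun y' => g m x' y') y) x)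
    (Hyy : Fin M → EuclideanSpace ℝ (Fin d) → EuclideanSpace ℝ (Fin p) →
      (EuclideanSpace ℝ (Fin p) →L[ℝ] EuclideanSpace ℝ (Fin p)))
    (hHyy : ∀ m x y, Hyy m x y = fderiv ℝ (gradient (fun y' => g m x y')) y)
    (hcross_bound : ∀ m x y, ‖Hxy m x y‖ ≤ Cgxy)
    (hcross_lip : ∀ m x1 y1 x2 y2, ‖Hxy m x1 y1 - Hxy m x2 y2‖ ≤
      Lgxy * Real.sqrt (‖x1 - x2‖ ^ 2 + ‖y1 - y2‖ ^ 2))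
    (hyy_lip : ∀ m x1 y1 x2 y2, ‖Hyy m x1 y1 - Hyy m x2 y2‖ ≤
      Lgyy * Real.sqrt (‖x1 - x2‖ ^ 2 + ‖y1 - y2‖ ^ 2))
    (ystar : EuclideanSpace ℝ (Fin d) → EuclideanSpace ℝ (Fin p))
    (hystar : Differentiable ℝ ystar)
    (hmin : ∀ x y, (M : ℝ)⁻¹ * ∑ m, g m x (ystar x) ≤ (M : ℝ)⁻¹ * ∑ m, g m x y) :
    ∀ x1 x2, ‖fderiv ℝ ystar x1 - fderiv ℝ ystar x2‖ ≤
      (Cgxy * Lgyy / μ ^ 2 + Lgxy / μ) * (1 + Cgxy / μ) * ‖x1 - x2‖ := by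
  have hM' : (0 : ℝ) < M := by exact_mod_cast hM
  have hslice : ∀ x : EuclideanSpace ℝ (Fin d),
      Differentiable ℝ fun y : EuclideanSpace ℝ (Fin p) => (x, y) :=
    fun x => (differentiable_const x).prodMk differentiable_id
  have hgy : ∀ m x, Differentiable ℝ fun y => g m x y :=
    fun m x => ((hg m).differentiable (by norm_num)).comp (hslice x)
  have hG : ∀ m, Differentiable ℝ fun q : EuclideanSpace ℝ (Fin d) × EuclideanSpace ℝ (Fin p) =>
      gradient (fun y => g m q.1 y) q.2 := fun m => (hg m).differentiable_gradient_right
  have hcritical : ∀ x, ∑ m, gradient (fun y => g m x y) (ystar x) = 0 := fun x =>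
    sum_gradient_eq_zero_of_isLocalMin _ (fun m _ => (hgy m x).differentiableAt)
      (IsMinOn.isLocalMin (fun y _ => le_of_mul_le_mul_left (hmin x y) (by positivity))
        Filter.univ_mem)
  have hident : ∀ x, ∑ m, Hxy m x (ystar x)
      + (∑ m, Hyy m x (ystar x)).comp (fderiv ℝ ystar x) = 0 := fun x => by
    simp only [hHxy, hHyy]
    exact sum_fderiv_add_comp_eq_zero_of_sum_eq_zero
      (Φ := fun m q => gradient (fun y => g m q.1 y) q.2) _
      (fun m _ => (hG m).differentiableAt) (hystar x) hcritical
  have hcoercive : ∀ x y w, M * μ * ‖w‖ ≤ ‖(∑ m, Hyy m x y) w‖ := fun x y => by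
    simpa using StrongConvexOn.card_mul_mul_norm_le_norm_sum_apply (hgy · x) (hsc · x)
      fun m => hHyy m x y ▸ ((hG m).comp (hslice x) y).hasFDerivAt
  intro x1 x2
  -- The sums have constants `M μ`, `M Cgxy`, `M Lgxy`, `M Lgyy`; the factor `M` cancels.
  convert norm_fderiv_sub_fderiv_le_of_add_comp_eq_zero (mul_pos hM' hμ)
    (mul_nonneg hM'.le hLxy) (mul_nonneg hM'.le hLyy) hystar hident
    (fun x => hcoercive x (ystar x))
    (fun x => by simpa using norm_sum_le_card_mul fun m => hcross_bound m x (ystar x))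
    (fun x1 x2 => by
      simpa [← Finset.sum_sub_distrib, mul_assoc] using
        norm_sum_le_card_mul fun m => hcross_lip m x1 (ystar x1) x2 (ystar x2))
    (fun x1 x2 => by
      simpa [← Finset.sum_sub_distrib, mul_assoc] using
        norm_sum_le_card_mul fun m => hyy_lip m x1 (ystar x1) x2 (ystar x2))
    x1 x2 using 2
  field_simp

/-- If each `g^m` satisfies `∇²_{yy} g^m ⪰ μ I` (i.e. `μ`-strong convexity in `y`),
`‖∇²_{xy} g^m‖ ≤ C_{gxy}`, and the second derivatives `∇²_{xy} g^m`, `∇²_{yy} g^m`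
are `L_{gxy}`- resp. `L_{gyy}`-Lipschitz jointly in `(x,y)` (w.r.t. the Euclidean
norm of the joint variable), then the Jacobian `∇y*(x)` of the minimizer mapping
is `L_y`-Lipschitz with `L_y = (C_{gxy} L_{gyy}/μ² + L_{gxy}/μ)(1 + C_{gxy}/μ)`. -/
theorem ystar_jacobian_lipschitz (d p M : ℕ) (hM : 0 < M)
    (μ Cgxy Lgxy Lgyy : ℝ) (hμ : 0 < μ) (hC : 0 ≤ Cgxy) (hLxy : 0 ≤ Lgxy) (hLyy : 0 ≤ Lgyy)
    (g : Fin M → EuclideanSpace ℝ (Fin d) → EuclideanSpace ℝ (Fin p) → ℝ)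
    (hg : ∀ m, ContDiff ℝ 2
      (fun q : EuclideanSpace ℝ (Fin d) × EuclideanSpace ℝ (Fin p) => g m q.1 q.2))
    (hsc : ∀ m x, StrongConvexOn Set.univ μ (fun y => g m x y))
    (Hxy : Fin M → EuclideanSpace ℝ (Fin d) → EuclideanSpace ℝ (Fin p) →
      (EuclideanSpace ℝ (Fin d) →L[ℝ] EuclideanSpace ℝ (Fin p)))
    (hHxy : ∀ m x y, Hxy m x y =
      fderiv ℝ (fun x' => gradient (fun y' => g m x' y') y) x)
    (Hyy : Fin M → EuclideanSpace ℝ (Fin d) → EuclideanSpace ℝ (Fin p) →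
      (EuclideanSpace ℝ (Fin p) →L[ℝ] EuclideanSpace ℝ (Fin p)))
    (hHyy : ∀ m x y, Hyy m x y = fderiv ℝ (gradient (fun y' => g m x y')) y)
    (hcross_bound : ∀ m x y, ‖Hxy m x y‖ ≤ Cgxy)
    (hcross_lip : ∀ m x1 y1 x2 y2, ‖Hxy m x1 y1 - Hxy m x2 y2‖ ≤
      Lgxy * Real.sqrt (‖x1 - x2‖ ^ 2 + ‖y1 - y2‖ ^ 2))
    (hyy_lip : ∀ m x1 y1 x2 y2, ‖Hyy m x1 y1 - Hyy m x2 y2‖ ≤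
      Lgyy * Real.sqrt (‖x1 - x2‖ ^ 2 + ‖y1 - y2‖ ^ 2))
    (ystar : EuclideanSpace ℝ (Fin d) → EuclideanSpace ℝ (Fin p))
    (hystar : Differentiable ℝ ystar)
    (hmin : ∀ x y, (M : ℝ)⁻¹ * ∑ m, g m x (ystar x) ≤ (M : ℝ)⁻¹ * ∑ m, g m x y) :
    ∀ x1 x2, ‖fderiv ℝ ystar x1 - fderiv ℝ ystar x2‖ ≤
      (Cgxy * Lgyy / μ ^ 2 + Lgxy / μ) * (1 + Cgxy / μ) * ‖x1 - x2‖ :=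
  ystar_jacobian_lipschitz_general d p M hM μ Cgxy Lgxy Lgyy hμ hLxy hLyy g hg hsc Hxy hHxy Hyy hHyy
    hcross_bound hcross_lip hyy_lip ystar hystar hmin
end

section
/- Under the assumptions that each ∇_x f^m and ∇_y f^m is L_f-Lipschitz, ||∇_y f^m|| ≤ C_{fy}, ||∇²_{xy} g^m|| ≤ C_{gxy}, ∇²_{xy} g^m is L_{gxy}-Lipschitz, ∇²_{yy} g^m is L_{gyy}-Lipschitz, and ∇²_{yy} g^m ⪰ μ I_p, the total objective F(x) = (1/M)∑_{m=1}^M f^m(x, y*(x)) has L-Lipschitz gradient with L = (L_f + C_{gxy} L_f/μ + C_{fy}(C_{gxy} L_{gyy}/μ² + L_{gxy}/μ))(1 + C_{gxy}/μ). -/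
/-!
Write `G x y = ∇_y g(x, y)`. Strong convexity makes each `G x` strongly monotone, so the
first-order condition `G x (y* x) = 0` forces `y*` to be `κ`-Lipschitz with `κ = C_gxy / μ`.
Differentiating that condition gives `∂ₓG + ∂_yG ∘ Dy* = 0` with `∂_yG` coercive, which bounds
`‖Dy*‖` by `κ` and `‖Dy*(x₁) - Dy*(x₂)‖` by `L_y ‖x₁ - x₂‖`. The chain rule
`∇F = ∇ₓf + (Dy*)† ∇_y f` then yields the estimate; each jointly Lipschitz quantity contributes
the factor `1 + κ`, since `√(‖x₁ - x₂‖² + ‖y* x₁ - y* x₂‖²) ≤ (1 + κ) ‖x₁ - x₂‖`.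
Averaging over `m` preserves every hypothesis, so the case `M = 1` suffices.
-/

open Set Finset InnerProductSpace RealInnerProductSpace
open scoped Gradient InnerProduct

theorem Real.sqrt_sq_add_sq_le_add {a b : ℝ} (ha : 0 ≤ a) (hb : 0 ≤ b) :
    Real.sqrt (a ^ 2 + b ^ 2) ≤ a + b :=
  Real.sqrt_le_iff.mpr ⟨add_nonneg ha hb, by nlinarith⟩

section InnerProductSpace

variable {F : Type*} [NormedAddCommGroup F] [InnerProductSpace ℝ F]

theorem ConvexOn.fderiv_sub_nonneg {φ : F → ℝ} (hφ : ConvexOn ℝ univ φ)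
    (hd : Differentiable ℝ φ) (a b : F) : 0 ≤ fderiv ℝ φ a (a - b) - fderiv ℝ φ b (a - b) := by
  set c : ℝ →ᵃ[ℝ] F := AffineMap.lineMap b a
  have hderiv : ∀ t, HasDerivAt (φ ∘ c) (fderiv ℝ φ (c t) (a - b)) t := fun t =>
    (hd (c t)).hasFDerivAt.comp_hasDerivAt t AffineMap.hasDerivAt_lineMap
  have hconv : ConvexOn ℝ univ (φ ∘ c) := by simpa using hφ.comp_affineMap c
  have hmono := hconv.monotoneOn_deriv (fun t _ => (hderiv t).differentiableAt)
    (mem_univ 0) (mem_univ 1) zero_le_one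
  rw [(hderiv 0).deriv, (hderiv 1).deriv] at hmono
  simp only [c, AffineMap.lineMap_apply_zero, AffineMap.lineMap_apply_one] at hmono
  linarith

theorem StrongConvexOn.mul_norm_sq_le_fderiv_sub {μ : ℝ} {φ : F → ℝ}
    (hφ : StrongConvexOn univ μ φ) (hd : Differentiable ℝ φ) (a b : F) :
    μ * ‖a - b‖ ^ 2 ≤ fderiv ℝ φ a (a - b) - fderiv ℝ φ b (a - b) := by
  have hsq : ∀ y : F, HasFDerivAt (fun y : F => μ / 2 * ‖y‖ ^ 2) ((μ / 2) • 2 • innerSL ℝ y) y :=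
    fun y => (hasStrictFDerivAt_norm_sq y).hasFDerivAt.const_smul (μ / 2)
  have hfderiv : ∀ y, fderiv ℝ (fun y => φ y - μ / 2 * ‖y‖ ^ 2) y (a - b)
      = fderiv ℝ φ y (a - b) - μ * ⟪y, a - b⟫ := fun y => by
    rw [((hd y).hasFDerivAt.fun_sub (hsq y)).fderiv]
    simp only [sub_apply, smul_apply, innerSL_apply_apply,
      smul_eq_mul, nsmul_eq_mul]
    ring
  have key := (strongConvexOn_iff_convex.mp hφ).fderiv_sub_nonneg
    (hd.sub fun y => (hsq y).differentiableAt) a b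
  rw [hfderiv, hfderiv] at key
  have hinner : ⟪a, a - b⟫ - ⟪b, a - b⟫ = ‖a - b‖ ^ 2 := by
    rw [← inner_sub_left, real_inner_self_eq_norm_sq]
  rw [← hinner]
  linarith

theorem mul_norm_le_of_mul_norm_sq_le_inner {μ : ℝ} {u w : F}
    (h : μ * ‖w‖ ^ 2 ≤ ⟪u, w⟫) : μ * ‖w‖ ≤ ‖u‖ := by
  rcases (norm_nonneg w).eq_or_lt with hw | hw
  · rw [← hw, mul_zero]; exact norm_nonneg u
  · nlinarith [real_inner_le_norm u w]

theorem HasFDerivAt.mul_norm_sq_le_inner_of_strongMonotone {μ : ℝ} {G : F → F} {A : F →L[ℝ] F}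
    {y : F} (hA : HasFDerivAt G A y) (hG : ∀ u v, μ * ‖u - v‖ ^ 2 ≤ ⟪G u - G v, u - v⟫)
    (v : F) : μ * ‖v‖ ^ 2 ≤ ⟪A v, v⟫ := by
  set h : ℝ → ℝ := fun t => ⟪G (y + t • v), v⟫ - μ * ‖v‖ ^ 2 * t
  have hderiv : HasDerivAt h (⟪A v, v⟫ - μ * ‖v‖ ^ 2) 0 := by
    have hline : HasDerivAt (fun t : ℝ => y + t • v) v 0 := by
      simpa using ((hasDerivAt_id (0 : ℝ)).smul_const v).const_add y
    have hGline := (hA.comp_hasDerivAt_of_eq (0 : ℝ) hline (by simp)).inner ℝ (hasDerivAt_const 0 v)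
    simpa using hGline.fun_sub ((hasDerivAt_id (0 : ℝ)).const_mul (μ * ‖v‖ ^ 2))
  -- strong monotonicity along the line through `y` in direction `v` is monotonicity of `h`
  have hmono : Monotone h := by
    intro s t hst
    have key := hG (y + t • v) (y + s • v)
    rw [add_sub_add_left_eq_sub, ← sub_smul, norm_smul, real_inner_smul_right, mul_pow,
      Real.norm_eq_abs, sq_abs] at key
    rcases hst.eq_or_lt with rfl | hlt
    · exact le_rfl
    have hpos : 0 < t - s := sub_pos.mpr hlt
    simp only [h, inner_sub_left] at key ⊢
    nlinarith
  have := hmono.deriv_nonneg (x := 0)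
  rw [hderiv.deriv] at this
  linarith

theorem ContinuousLinearMap.mul_opNorm_le_opNorm_comp_of_coercive {E : Type*}
    [NormedAddCommGroup E] [NormedSpace ℝ E] {μ : ℝ} (hμ : 0 < μ) {B : F →L[ℝ] F}
    (hB : ∀ v, μ * ‖v‖ ^ 2 ≤ ⟪B v, v⟫) (T : E →L[ℝ] F) : μ * ‖T‖ ≤ ‖B.comp T‖ := by
  rw [← le_div_iff₀' hμ]
  refine T.opNorm_le_bound (by positivity) fun v => ?_
  rw [div_mul_eq_mul_div, le_div_iff₀' hμ]
  exact (mul_norm_le_of_mul_norm_sq_le_inner (hB (T v))).trans ((B.comp T).le_opNorm v)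

theorem mul_norm_sub_le_of_apply_eq_zero {E : Type*} [NormedAddCommGroup E] {μ C : ℝ}
    {G : E → F → F} {y : E → F}
    (hmono : ∀ x u v, μ * ‖u - v‖ ^ 2 ≤ ⟪G x u - G x v, u - v⟫)
    (hroot : ∀ x, G x (y x) = 0) (hG : ∀ z u w, ‖G u z - G w z‖ ≤ C * ‖u - w‖) (u w : E) :
    μ * ‖y u - y w‖ ≤ C * ‖u - w‖ := by
  have h := hmono u (y u) (y w)
  rw [hroot u, ← hroot w] at h
  calc μ * ‖y u - y w‖ ≤ ‖G w (y w) - G u (y w)‖ := mul_norm_le_of_mul_norm_sq_le_inner h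
    _ = ‖G u (y w) - G w (y w)‖ := norm_sub_rev _ _
    _ ≤ C * ‖u - w‖ := hG _ _ _

end InnerProductSpace

section Partial

variable {E P V : Type*} [NormedAddCommGroup E] [NormedSpace ℝ E] [NormedAddCommGroup P]
  [NormedSpace ℝ P] [NormedAddCommGroup V] [NormedSpace ℝ V]

theorem Differentiable.uncurry_left {Φ : E → P → V}
    (h : Differentiable ℝ (fun q : E × P => Φ q.1 q.2)) (y : P) :
    Differentiable ℝ (fun x => Φ x y) :=
  h.comp (differentiable_id.prodMk (differentiable_const y))

theorem Differentiable.uncurry_right {Φ : E → P → V}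
    (h : Differentiable ℝ (fun q : E × P => Φ q.1 q.2)) (x : E) : Differentiable ℝ (Φ x) :=
  h.comp ((differentiable_const x).prodMk differentiable_id)

theorem fderiv_const_smul_sum {ι : Type*} {s : Finset ι} {F : ι → E → V} {x : E}
    (hF : ∀ i ∈ s, DifferentiableAt ℝ (F i) x) (c : ℝ) :
    fderiv ℝ (fun x' => c • ∑ i ∈ s, F i x') x = c • ∑ i ∈ s, fderiv ℝ (F i) x := by
  rw [fderiv_fun_const_smul (DifferentiableAt.fun_sum hF), fderiv_fun_sum hF]

theorem HasFDerivAt.comp_prodMk_partial {Φ : E → P → V} {y : E → P} {J : E →L[ℝ] P} {x : E}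
    (hΦ : DifferentiableAt ℝ (fun q : E × P => Φ q.1 q.2) (x, y x)) (hy : HasFDerivAt y J x) :
    HasFDerivAt (fun x' => Φ x' (y x'))
      (fderiv ℝ (fun x' => Φ x' (y x)) x + (fderiv ℝ (Φ x) (y x)).comp J) x := by
  have hΦx : fderiv ℝ (fun x' => Φ x' (y x)) x
      = (fderiv ℝ (fun q : E × P => Φ q.1 q.2) (x, y x)).comp (.inl ℝ E P) :=
    HasFDerivAt.fderiv (hΦ.hasFDerivAt.comp x (hasFDerivAt_prodMk_left (𝕜 := ℝ) x (y x)) :)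
  have hΦy : fderiv ℝ (Φ x) (y x)
      = (fderiv ℝ (fun q : E × P => Φ q.1 q.2) (x, y x)).comp (.inr ℝ E P) :=
    HasFDerivAt.fderiv (hΦ.hasFDerivAt.comp (y x) (hasFDerivAt_prodMk_right (𝕜 := ℝ) x (y x)) :)
  refine (hΦ.hasFDerivAt.comp x ((hasFDerivAt_id x).prodMk hy)).congr_fderiv ?_
  ext v
  simp [hΦx, hΦy, ← map_add]

theorem fderiv_add_comp_fderiv_eq_zero {G : E → P → V} {y : E → P} {x : E}
    (hG : DifferentiableAt ℝ (fun q : E × P => G q.1 q.2) (x, y x)) (hy : DifferentiableAt ℝ y x)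
    (hroot : ∀ x, G x (y x) = 0) :
    fderiv ℝ (fun x' => G x' (y x)) x + (fderiv ℝ (G x) (y x)).comp (fderiv ℝ y x) = 0 := by
  have hconst : (fun x' => G x' (y x')) = fun _ => 0 := funext hroot
  have := HasFDerivAt.comp_prodMk_partial hG hy.hasFDerivAt
  rw [hconst] at this
  exact this.unique (hasFDerivAt_const 0 x)

end Partial

section SolutionMap

variable {E P : Type*} [NormedAddCommGroup E] [NormedSpace ℝ E]
  [NormedAddCommGroup P] [InnerProductSpace ℝ P]

theorem mul_opNorm_le_of_add_comp_eq_zero {μ : ℝ} (hμ : 0 < μ) {A J : E →L[ℝ] P}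
    {B : P →L[ℝ] P} (hB : ∀ v, μ * ‖v‖ ^ 2 ≤ ⟪B v, v⟫) (h : A + B.comp J = 0) :
    μ * ‖J‖ ≤ ‖A‖ := by
  have := B.mul_opNorm_le_opNorm_comp_of_coercive hμ hB J
  rwa [eq_neg_of_add_eq_zero_right h, norm_neg] at this

theorem mul_opNorm_sub_le_of_add_comp_eq_zero {μ : ℝ} (hμ : 0 < μ) {A₁ A₂ J₁ J₂ : E →L[ℝ] P}
    {B₁ B₂ : P →L[ℝ] P} (hB₁ : ∀ v, μ * ‖v‖ ^ 2 ≤ ⟪B₁ v, v⟫) (h₁ : A₁ + B₁.comp J₁ = 0)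
    (h₂ : A₂ + B₂.comp J₂ = 0) : μ * ‖J₁ - J₂‖ ≤ ‖A₁ - A₂‖ + ‖B₁ - B₂‖ * ‖J₂‖ := by
  have hcomp : B₁.comp (J₁ - J₂) = -(A₁ - A₂) - (B₁ - B₂).comp J₂ := by
    rw [ContinuousLinearMap.comp_sub, ContinuousLinearMap.sub_comp,
      eq_neg_of_add_eq_zero_right h₁, eq_neg_of_add_eq_zero_left h₂]
    abel
  calc μ * ‖J₁ - J₂‖ ≤ ‖B₁.comp (J₁ - J₂)‖ := B₁.mul_opNorm_le_opNorm_comp_of_coercive hμ hB₁ _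
    _ ≤ ‖A₁ - A₂‖ + ‖B₁ - B₂‖ * ‖J₂‖ := by
      rw [hcomp]
      refine (norm_sub_le _ _).trans ?_
      rw [norm_neg]
      gcongr
      exact ContinuousLinearMap.opNorm_comp_le _ _

theorem mul_opNorm_fderiv_le_of_apply_eq_zero {μ : ℝ} (hμ : 0 < μ) {G : E → P → P} {y : E → P}
    {x : E} (hG : DifferentiableAt ℝ (fun q : E × P => G q.1 q.2) (x, y x))
    (hmono : ∀ u v, μ * ‖u - v‖ ^ 2 ≤ ⟪G x u - G x v, u - v⟫) (hroot : ∀ x, G x (y x) = 0)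
    (hy : DifferentiableAt ℝ y x) :
    μ * ‖fderiv ℝ y x‖ ≤ ‖fderiv ℝ (fun x' => G x' (y x)) x‖ :=
  mul_opNorm_le_of_add_comp_eq_zero hμ
    (hG.comp (y x) ((differentiableAt_const x).prodMk differentiableAt_id)
      |>.hasFDerivAt.mul_norm_sq_le_inner_of_strongMonotone hmono)
    (fderiv_add_comp_fderiv_eq_zero hG hy hroot)

theorem mul_opNorm_fderiv_sub_le_of_apply_eq_zero {μ : ℝ} (hμ : 0 < μ) {G : E → P → P}
    {y : E → P} {x₁ x₂ : E} (hG₁ : DifferentiableAt ℝ (fun q : E × P => G q.1 q.2) (x₁, y x₁))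
    (hG₂ : DifferentiableAt ℝ (fun q : E × P => G q.1 q.2) (x₂, y x₂))
    (hmono : ∀ u v, μ * ‖u - v‖ ^ 2 ≤ ⟪G x₁ u - G x₁ v, u - v⟫) (hroot : ∀ x, G x (y x) = 0)
    (hy₁ : DifferentiableAt ℝ y x₁) (hy₂ : DifferentiableAt ℝ y x₂) :
    μ * ‖fderiv ℝ y x₁ - fderiv ℝ y x₂‖ ≤
      ‖fderiv ℝ (fun x' => G x' (y x₁)) x₁ - fderiv ℝ (fun x' => G x' (y x₂)) x₂‖ +
        ‖fderiv ℝ (G x₁) (y x₁) - fderiv ℝ (G x₂) (y x₂)‖ * ‖fderiv ℝ y x₂‖ :=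
  mul_opNorm_sub_le_of_add_comp_eq_zero hμ
    (hG₁.comp (y x₁) ((differentiableAt_const x₁).prodMk differentiableAt_id)
      |>.hasFDerivAt.mul_norm_sq_le_inner_of_strongMonotone hmono)
    (fderiv_add_comp_fderiv_eq_zero hG₁ hy₁ hroot) (fderiv_add_comp_fderiv_eq_zero hG₂ hy₂ hroot)

end SolutionMap

section Average

theorem norm_inv_natCast_smul_sum_le {V : Type*} [NormedAddCommGroup V] [NormedSpace ℝ V]
    {n : ℕ} (hn : 0 < n) {v : Fin n → V} {C : ℝ} (h : ∀ i, ‖v i‖ ≤ C) :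
    ‖(n : ℝ)⁻¹ • ∑ i, v i‖ ≤ C := by
  rw [norm_smul, norm_inv, Real.norm_natCast, inv_mul_le_iff₀ (by exact_mod_cast hn)]
  simpa using norm_sum_le_of_le Finset.univ fun i _ => h i

theorem norm_inv_natCast_smul_sum_sub_le {V : Type*} [NormedAddCommGroup V] [NormedSpace ℝ V]
    {n : ℕ} (hn : 0 < n) {v w : Fin n → V} {C : ℝ} (h : ∀ i, ‖v i - w i‖ ≤ C) :
    ‖(n : ℝ)⁻¹ • ∑ i, v i - (n : ℝ)⁻¹ • ∑ i, w i‖ ≤ C := by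
  rw [← smul_sub, ← sum_sub_distrib]
  exact norm_inv_natCast_smul_sum_le hn h

theorem StrongConvexOn.inv_natCast_mul_sum {V : Type*} [NormedAddCommGroup V] [NormedSpace ℝ V]
    {n : ℕ} (hn : 0 < n) {s : Set V} {μ : ℝ} {φ : Fin n → V → ℝ}
    (hφ : ∀ i, StrongConvexOn s μ (φ i)) :
    StrongConvexOn s μ (fun y => (n : ℝ)⁻¹ * ∑ i, φ i y) := by
  have hn' : (n : ℝ) ≠ 0 := by exact_mod_cast hn.ne'
  refine ⟨(hφ ⟨0, hn⟩).1, fun x hx y hy a b ha hb hab => ?_⟩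
  have hsum := Finset.sum_le_sum fun i (_ : i ∈ Finset.univ) => (hφ i).2 hx hy ha hb hab
  simp only [smul_eq_mul, sum_sub_distrib, sum_add_distrib, ← mul_sum, sum_const, card_univ,
    Fintype.card_fin, nsmul_eq_mul] at hsum ⊢
  calc (n : ℝ)⁻¹ * ∑ i, φ i (a • x + b • y)
      ≤ (n : ℝ)⁻¹ * (a * ∑ i, φ i x + b * ∑ i, φ i y
          - n * (a * b * (μ / 2 * ‖x - y‖ ^ 2))) := by gcongr; linarith
    _ = _ := by field_simp

end Average

section Gradient

variable {E P : Type*} [NormedAddCommGroup E] [NormedSpace ℝ E]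
  [NormedAddCommGroup P] [InnerProductSpace ℝ P] [CompleteSpace P]

theorem inner_gradient_eq_fderiv (φ : P → ℝ) (x v : P) : ⟪∇ φ x, v⟫ = fderiv ℝ φ x v :=
  toDual_symm_apply

theorem StrongConvexOn.mul_norm_sq_le_inner_gradient_sub {μ : ℝ} {φ : P → ℝ}
    (hφ : StrongConvexOn univ μ φ) (hd : Differentiable ℝ φ) (a b : P) :
    μ * ‖a - b‖ ^ 2 ≤ ⟪∇ φ a - ∇ φ b, a - b⟫ := by
  rw [inner_sub_left, inner_gradient_eq_fderiv, inner_gradient_eq_fderiv]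
  exact hφ.mul_norm_sq_le_fderiv_sub hd a b

theorem IsLocalMin.gradient_eq_zero {φ : P → ℝ} {a : P} (h : IsLocalMin φ a) : ∇ φ a = 0 := by
  simp [gradient, h.fderiv_eq_zero]

theorem gradient_const_mul_sum {ι : Type*} {s : Finset ι} {φ : ι → P → ℝ} {y : P}
    (hφ : ∀ i ∈ s, DifferentiableAt ℝ (φ i) y) (c : ℝ) :
    ∇ (fun y' => c * ∑ i ∈ s, φ i y') y = c • ∑ i ∈ s, ∇ (φ i) y := by
  apply (toDual ℝ P).injective
  rw [toDual_gradient, fderiv_const_mul (DifferentiableAt.fun_sum hφ), fderiv_fun_sum hφ]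
  simp

theorem differentiable_gradient_of_contDiff_two {g : E → P → ℝ}
    (hg : ContDiff ℝ 2 (fun q : E × P => g q.1 q.2)) :
    Differentiable ℝ (fun q : E × P => ∇ (g q.1) q.2) := by
  have hD : ContDiff ℝ 1 (fun q : E × P => fderiv ℝ (g q.1) q.2) :=
    ContDiff.fderiv (hg.comp ((contDiff_fst.comp contDiff_fst).prodMk contDiff_snd)) contDiff_snd
      (by norm_num)
  exact ((toDual ℝ P).symm.contDiff.comp hD).differentiable one_ne_zero

section Argmin

variable {g : E → P → ℝ} {ystar : E → P} {μ Cgxy : ℝ}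

theorem norm_argmin_sub_le (hμ : 0 < μ) (hg : ContDiff ℝ 2 (fun q : E × P => g q.1 q.2))
    (hsc : ∀ x, StrongConvexOn univ μ (g x))
    (hcross_bound : ∀ x y, ‖fderiv ℝ (fun x' => ∇ (g x') y) x‖ ≤ Cgxy)
    (hmin : ∀ x y, g x (ystar x) ≤ g x y) (u w : E) :
    ‖ystar u - ystar w‖ ≤ Cgxy / μ * ‖u - w‖ := by
  rw [div_mul_eq_mul_div, le_div_iff₀' hμ]
  exact mul_norm_sub_le_of_apply_eq_zero (G := fun x y => ∇ (g x) y)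
    (fun x => (hsc x).mul_norm_sq_le_inner_gradient_sub
      ((hg.differentiable two_ne_zero).uncurry_right x))
    (fun x => IsLocalMin.gradient_eq_zero (Filter.Eventually.of_forall (hmin x)))
    (fun z u w => convex_univ.norm_image_sub_le_of_norm_fderiv_le
      (fun x _ => (differentiable_gradient_of_contDiff_two hg).uncurry_left z x)
      (fun x _ => hcross_bound x z) (mem_univ w) (mem_univ u)) u w

theorem sqrt_sq_norm_sub_add_sq_norm_argmin_sub_le (hμ : 0 < μ)
    (hg : ContDiff ℝ 2 (fun q : E × P => g q.1 q.2)) (hsc : ∀ x, StrongConvexOn univ μ (g x))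
    (hcross_bound : ∀ x y, ‖fderiv ℝ (fun x' => ∇ (g x') y) x‖ ≤ Cgxy)
    (hmin : ∀ x y, g x (ystar x) ≤ g x y) (x₁ x₂ : E) :
    Real.sqrt (‖x₁ - x₂‖ ^ 2 + ‖ystar x₁ - ystar x₂‖ ^ 2) ≤ (1 + Cgxy / μ) * ‖x₁ - x₂‖ := by
  refine (Real.sqrt_sq_add_sq_le_add (norm_nonneg _) (norm_nonneg _)).trans ?_
  rw [add_mul, one_mul, add_le_add_iff_left]
  exact norm_argmin_sub_le hμ hg hsc hcross_bound hmin x₁ x₂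

theorem opNorm_fderiv_argmin_le (hμ : 0 < μ) (hg : ContDiff ℝ 2 (fun q : E × P => g q.1 q.2))
    (hsc : ∀ x, StrongConvexOn univ μ (g x))
    (hcross_bound : ∀ x y, ‖fderiv ℝ (fun x' => ∇ (g x') y) x‖ ≤ Cgxy)
    (hmin : ∀ x y, g x (ystar x) ≤ g x y) {x : E} (hystar : DifferentiableAt ℝ ystar x) :
    ‖fderiv ℝ ystar x‖ ≤ Cgxy / μ := by
  rw [le_div_iff₀' hμ]
  exact (mul_opNorm_fderiv_le_of_apply_eq_zero (G := fun x y => ∇ (g x) y) hμ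
    (differentiable_gradient_of_contDiff_two hg _)
    ((hsc x).mul_norm_sq_le_inner_gradient_sub ((hg.differentiable two_ne_zero).uncurry_right x))
    (fun x => IsLocalMin.gradient_eq_zero (Filter.Eventually.of_forall (hmin x))) hystar).trans
    (hcross_bound _ _)

theorem opNorm_fderiv_argmin_sub_le {Lgxy Lgyy : ℝ} (hμ : 0 < μ) (hLgxy : 0 ≤ Lgxy)
    (hLgyy : 0 ≤ Lgyy) (hg : ContDiff ℝ 2 (fun q : E × P => g q.1 q.2))
    (hsc : ∀ x, StrongConvexOn univ μ (g x))
    (hcross_bound : ∀ x y, ‖fderiv ℝ (fun x' => ∇ (g x') y) x‖ ≤ Cgxy)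
    (hcross_lip : ∀ x1 y1 x2 y2,
      ‖fderiv ℝ (fun x' => ∇ (g x') y1) x1 - fderiv ℝ (fun x' => ∇ (g x') y2) x2‖ ≤
        Lgxy * Real.sqrt (‖x1 - x2‖ ^ 2 + ‖y1 - y2‖ ^ 2))
    (hyy_lip : ∀ x1 y1 x2 y2, ‖fderiv ℝ (∇ (g x1)) y1 - fderiv ℝ (∇ (g x2)) y2‖ ≤
      Lgyy * Real.sqrt (‖x1 - x2‖ ^ 2 + ‖y1 - y2‖ ^ 2))
    (hystar : Differentiable ℝ ystar) (hmin : ∀ x y, g x (ystar x) ≤ g x y) (x₁ x₂ : E) :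
    ‖fderiv ℝ ystar x₁ - fderiv ℝ ystar x₂‖ ≤
      (Lgxy + Cgxy / μ * Lgyy) * (1 + Cgxy / μ) / μ * ‖x₁ - x₂‖ := by
  have hdist := sqrt_sq_norm_sub_add_sq_norm_argmin_sub_le hμ hg hsc hcross_bound hmin x₁ x₂
  have hA := (hcross_lip x₁ (ystar x₁) x₂ (ystar x₂)).trans
    (mul_le_mul_of_nonneg_left hdist hLgxy)
  have hB := (hyy_lip x₁ (ystar x₁) x₂ (ystar x₂)).trans (mul_le_mul_of_nonneg_left hdist hLgyy)
  have hJ₂ := opNorm_fderiv_argmin_le hμ hg hsc hcross_bound hmin (hystar x₂)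
  have hGd := differentiable_gradient_of_contDiff_two hg
  rw [div_mul_eq_mul_div, le_div_iff₀' hμ]
  calc μ * ‖fderiv ℝ ystar x₁ - fderiv ℝ ystar x₂‖
      ≤ _ := mul_opNorm_fderiv_sub_le_of_apply_eq_zero (G := fun x y => ∇ (g x) y) hμ (hGd _)
        (hGd _) ((hsc x₁).mul_norm_sq_le_inner_gradient_sub
          ((hg.differentiable two_ne_zero).uncurry_right x₁))
        (fun x => IsLocalMin.gradient_eq_zero (Filter.Eventually.of_forall (hmin x)))
        (hystar x₁) (hystar x₂)
    _ ≤ Lgxy * ((1 + Cgxy / μ) * ‖x₁ - x₂‖) + Lgyy * ((1 + Cgxy / μ) * ‖x₁ - x₂‖) * (Cgxy / μ) :=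
        add_le_add hA (mul_le_mul hB hJ₂ (norm_nonneg _) ((norm_nonneg _).trans hB))
    _ = _ := by ring

end Argmin

variable {ι : Type*} {s : Finset ι} {g : ι → E → P → ℝ}

theorem gradient_right_const_mul_sum (hg : ∀ i ∈ s, Differentiable ℝ (fun q : E × P => g i q.1 q.2))
    (c : ℝ) (x : E) :
    ∇ (fun y' => c * ∑ i ∈ s, g i x y') = fun y => c • ∑ i ∈ s, ∇ (g i x) y :=
  funext fun y => gradient_const_mul_sum (fun i hi => (hg i hi).uncurry_right x y) c

theorem fderiv_left_gradient_const_mul_sum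
    (hg : ∀ i ∈ s, ContDiff ℝ 2 (fun q : E × P => g i q.1 q.2)) (c : ℝ) (x : E) (y : P) :
    fderiv ℝ (fun x' => ∇ (fun y' => c * ∑ i ∈ s, g i x' y') y) x
      = c • ∑ i ∈ s, fderiv ℝ (fun x' => ∇ (g i x') y) x := by
  simp only [gradient_right_const_mul_sum (fun i hi => (hg i hi).differentiable two_ne_zero)]
  exact fderiv_const_smul_sum
    (fun i hi => (differentiable_gradient_of_contDiff_two (hg i hi)).uncurry_left y x) c

theorem fderiv_right_gradient_const_mul_sum
    (hg : ∀ i ∈ s, ContDiff ℝ 2 (fun q : E × P => g i q.1 q.2)) (c : ℝ) (x : E) (y : P) :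
    fderiv ℝ (∇ (fun y' => c * ∑ i ∈ s, g i x y')) y
      = c • ∑ i ∈ s, fderiv ℝ (∇ (g i x)) y := by
  rw [gradient_right_const_mul_sum (fun i hi => (hg i hi).differentiable two_ne_zero)]
  exact fderiv_const_smul_sum (fun i hi => Differentiable.uncurry_right
    (Φ := fun x' => ∇ (g i x')) (differentiable_gradient_of_contDiff_two (hg i hi)) x y) c

end Gradient

section Hyperobjective

variable {E P : Type*} [NormedAddCommGroup E] [InnerProductSpace ℝ E] [CompleteSpace E]
  [NormedAddCommGroup P] [InnerProductSpace ℝ P] [CompleteSpace P]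

theorem gradient_comp_prodMk {f : E → P → ℝ} {y : E → P} {x : E}
    (hf : DifferentiableAt ℝ (fun q : E × P => f q.1 q.2) (x, y x)) (hy : DifferentiableAt ℝ y x) :
    ∇ (fun x' => f x' (y x')) x
      = ∇ (fun x' => f x' (y x)) x + ((fderiv ℝ y x)†) (∇ (f x) (y x)) := by
  apply (toDual ℝ E).injective
  rw [toDual_gradient, (HasFDerivAt.comp_prodMk_partial hf hy.hasFDerivAt).fderiv]
  ext v
  simp [ContinuousLinearMap.adjoint_inner_left]

theorem norm_add_adjoint_sub_le (a₁ a₂ : E) (b₁ b₂ : P) (J₁ J₂ : E →L[ℝ] P) :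
    ‖(a₁ + (J₁†) b₁) - (a₂ + (J₂†) b₂)‖ ≤ ‖a₁ - a₂‖ + ‖J₁‖ * ‖b₁ - b₂‖ + ‖J₁ - J₂‖ * ‖b₂‖ := by
  have hsplit : (a₁ + (J₁†) b₁) - (a₂ + (J₂†) b₂)
      = (a₁ - a₂) + (J₁†) (b₁ - b₂) + ((J₁ - J₂)†) b₂ := by
    simp only [map_sub, sub_apply]
    abel
  rw [hsplit]
  refine (norm_add₃_le).trans (add_le_add (add_le_add le_rfl ?_) ?_) <;>
    refine (ContinuousLinearMap.le_opNorm _ _).trans_eq ?_ <;>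
    rw [LinearIsometryEquiv.norm_map]

theorem norm_gradient_comp_argmin_sub_le {f g : E → P → ℝ} {ystar : E → P}
    {μ Lf Cfy Cgxy Lgxy Lgyy : ℝ} (hμ : 0 < μ) (hLf : 0 ≤ Lf) (hLgxy : 0 ≤ Lgxy)
    (hLgyy : 0 ≤ Lgyy) (hf : ContDiff ℝ 1 (fun q : E × P => f q.1 q.2))
    (hg : ContDiff ℝ 2 (fun q : E × P => g q.1 q.2))
    (hfx_lip : ∀ x1 y1 x2 y2, ‖∇ (fun x' => f x' y1) x1 - ∇ (fun x' => f x' y2) x2‖ ≤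
      Lf * Real.sqrt (‖x1 - x2‖ ^ 2 + ‖y1 - y2‖ ^ 2))
    (hfy_lip : ∀ x1 y1 x2 y2, ‖∇ (f x1) y1 - ∇ (f x2) y2‖ ≤
      Lf * Real.sqrt (‖x1 - x2‖ ^ 2 + ‖y1 - y2‖ ^ 2))
    (hfy_bound : ∀ x y, ‖∇ (f x) y‖ ≤ Cfy) (hsc : ∀ x, StrongConvexOn univ μ (g x))
    (hcross_bound : ∀ x y, ‖fderiv ℝ (fun x' => ∇ (g x') y) x‖ ≤ Cgxy)
    (hcross_lip : ∀ x1 y1 x2 y2,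
      ‖fderiv ℝ (fun x' => ∇ (g x') y1) x1 - fderiv ℝ (fun x' => ∇ (g x') y2) x2‖ ≤
        Lgxy * Real.sqrt (‖x1 - x2‖ ^ 2 + ‖y1 - y2‖ ^ 2))
    (hyy_lip : ∀ x1 y1 x2 y2, ‖fderiv ℝ (∇ (g x1)) y1 - fderiv ℝ (∇ (g x2)) y2‖ ≤
      Lgyy * Real.sqrt (‖x1 - x2‖ ^ 2 + ‖y1 - y2‖ ^ 2))
    (hystar : Differentiable ℝ ystar) (hmin : ∀ x y, g x (ystar x) ≤ g x y) (x1 x2 : E) :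
    ‖∇ (fun x => f x (ystar x)) x1 - ∇ (fun x => f x (ystar x)) x2‖ ≤
      (Lf + Cgxy * Lf / μ + Cfy * (Cgxy * Lgyy / μ ^ 2 + Lgxy / μ)) * (1 + Cgxy / μ) *
        ‖x1 - x2‖ := by
  have hdist := sqrt_sq_norm_sub_add_sq_norm_argmin_sub_le hμ hg hsc hcross_bound hmin x1 x2
  have hJ := opNorm_fderiv_argmin_le hμ hg hsc hcross_bound hmin (hystar x1)
  have hJlip := opNorm_fderiv_argmin_sub_le hμ hLgxy hLgyy hg hsc hcross_bound hcross_lip hyy_lip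
    hystar hmin x1 x2
  have ha := (hfx_lip x1 (ystar x1) x2 (ystar x2)).trans (mul_le_mul_of_nonneg_left hdist hLf)
  have hb := (hfy_lip x1 (ystar x1) x2 (ystar x2)).trans (mul_le_mul_of_nonneg_left hdist hLf)
  have hfd := hf.differentiable one_ne_zero
  rw [gradient_comp_prodMk (hfd _) (hystar x1), gradient_comp_prodMk (hfd _) (hystar x2)]
  calc _ ≤ _ := norm_add_adjoint_sub_le _ _ _ _ _ _
    _ ≤ Lf * ((1 + Cgxy / μ) * ‖x1 - x2‖) + Cgxy / μ * (Lf * ((1 + Cgxy / μ) * ‖x1 - x2‖)) +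
          (Lgxy + Cgxy / μ * Lgyy) * (1 + Cgxy / μ) / μ * ‖x1 - x2‖ * Cfy :=
        add_le_add (add_le_add ha (mul_le_mul hJ hb (norm_nonneg _) ((norm_nonneg _).trans hJ)))
          (mul_le_mul hJlip (hfy_bound _ _) (norm_nonneg _) ((norm_nonneg _).trans hJlip))
    _ = _ := by
      field_simp
      ring

end Hyperobjective

theorem total_objective_smooth_general (d p M : ℕ) (hM : 0 < M)
    (μ Lf Cfy Cgxy Lgxy Lgyy : ℝ) (hμ : 0 < μ) (hLf : 0 ≤ Lf)
    (hLgxy : 0 ≤ Lgxy) (hLgyy : 0 ≤ Lgyy)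
    (f g : Fin M → EuclideanSpace ℝ (Fin d) → EuclideanSpace ℝ (Fin p) → ℝ)
    (hf : ∀ m, ContDiff ℝ 1
      (fun q : EuclideanSpace ℝ (Fin d) × EuclideanSpace ℝ (Fin p) => f m q.1 q.2))
    (hg : ∀ m, ContDiff ℝ 2
      (fun q : EuclideanSpace ℝ (Fin d) × EuclideanSpace ℝ (Fin p) => g m q.1 q.2))
    (hfx_lip : ∀ m x1 y1 x2 y2,
      ‖gradient (fun x' => f m x' y1) x1 - gradient (fun x' => f m x' y2) x2‖ ≤
        Lf * Real.sqrt (‖x1 - x2‖ ^ 2 + ‖y1 - y2‖ ^ 2))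
    (hfy_lip : ∀ m x1 y1 x2 y2,
      ‖gradient (fun y' => f m x1 y') y1 - gradient (fun y' => f m x2 y') y2‖ ≤
        Lf * Real.sqrt (‖x1 - x2‖ ^ 2 + ‖y1 - y2‖ ^ 2))
    (hfy_bound : ∀ m x y, ‖gradient (fun y' => f m x y') y‖ ≤ Cfy)
    (hsc : ∀ m x, StrongConvexOn Set.univ μ (fun y => g m x y))
    (Hxy : Fin M → EuclideanSpace ℝ (Fin d) → EuclideanSpace ℝ (Fin p) →
      (EuclideanSpace ℝ (Fin d) →L[ℝ] EuclideanSpace ℝ (Fin p)))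
    (hHxy : ∀ m x y, Hxy m x y =
      fderiv ℝ (fun x' => gradient (fun y' => g m x' y') y) x)
    (Hyy : Fin M → EuclideanSpace ℝ (Fin d) → EuclideanSpace ℝ (Fin p) →
      (EuclideanSpace ℝ (Fin p) →L[ℝ] EuclideanSpace ℝ (Fin p)))
    (hHyy : ∀ m x y, Hyy m x y = fderiv ℝ (gradient (fun y' => g m x y')) y)
    (hcross_bound : ∀ m x y, ‖Hxy m x y‖ ≤ Cgxy)
    (hcross_lip : ∀ m x1 y1 x2 y2, ‖Hxy m x1 y1 - Hxy m x2 y2‖ ≤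
      Lgxy * Real.sqrt (‖x1 - x2‖ ^ 2 + ‖y1 - y2‖ ^ 2))
    (hyy_lip : ∀ m x1 y1 x2 y2, ‖Hyy m x1 y1 - Hyy m x2 y2‖ ≤
      Lgyy * Real.sqrt (‖x1 - x2‖ ^ 2 + ‖y1 - y2‖ ^ 2))
    (ystar : EuclideanSpace ℝ (Fin d) → EuclideanSpace ℝ (Fin p))
    (hystar : Differentiable ℝ ystar)
    (hmin : ∀ x y, (M : ℝ)⁻¹ * ∑ m, g m x (ystar x) ≤ (M : ℝ)⁻¹ * ∑ m, g m x y) :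
    ∀ x1 x2,
      ‖gradient (fun x => (M : ℝ)⁻¹ * ∑ m, f m x (ystar x)) x1 -
        gradient (fun x => (M : ℝ)⁻¹ * ∑ m, f m x (ystar x)) x2‖ ≤
      (Lf + Cgxy * Lf / μ + Cfy * (Cgxy * Lgyy / μ ^ 2 + Lgxy / μ)) * (1 + Cgxy / μ) *
        ‖x1 - x2‖ := by
  intro x1 x2
  have hfd m := (hf m).differentiable one_ne_zero
  have hgrad_fx x y : ∇ (fun x' => (M : ℝ)⁻¹ * ∑ m, f m x' y) x
      = (M : ℝ)⁻¹ • ∑ m, ∇ (fun x' => f m x' y) x :=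
    gradient_const_mul_sum (fun m _ => (hfd m).uncurry_left y x) _
  have hgrad_fy x y : ∇ (fun y' => (M : ℝ)⁻¹ * ∑ m, f m x y') y
      = (M : ℝ)⁻¹ • ∑ m, ∇ (f m x) y :=
    gradient_const_mul_sum (fun m _ => (hfd m).uncurry_right x y) _
  have hHxy_avg x y : fderiv ℝ (fun x' => ∇ (fun y' => (M : ℝ)⁻¹ * ∑ m, g m x' y') y) x
      = (M : ℝ)⁻¹ • ∑ m, Hxy m x y := by
    simp only [hHxy, fderiv_left_gradient_const_mul_sum fun m _ => hg m]
  have hHyy_avg x y : fderiv ℝ (∇ (fun y' => (M : ℝ)⁻¹ * ∑ m, g m x y')) y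
      = (M : ℝ)⁻¹ • ∑ m, Hyy m x y := by
    simp only [hHyy, fderiv_right_gradient_const_mul_sum fun m _ => hg m]
  exact norm_gradient_comp_argmin_sub_le (f := fun x y => (M : ℝ)⁻¹ * ∑ m, f m x y)
    (g := fun x y => (M : ℝ)⁻¹ * ∑ m, g m x y) hμ hLf hLgxy hLgyy
    (contDiff_const.mul (ContDiff.sum fun m _ => hf m))
    (contDiff_const.mul (ContDiff.sum fun m _ => hg m))
    (fun _ _ _ _ => by
      rw [hgrad_fx, hgrad_fx]; exact norm_inv_natCast_smul_sum_sub_le hM fun m => hfx_lip m ..)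
    (fun _ _ _ _ => by
      rw [hgrad_fy, hgrad_fy]; exact norm_inv_natCast_smul_sum_sub_le hM fun m => hfy_lip m ..)
    (fun _ _ => by rw [hgrad_fy]; exact norm_inv_natCast_smul_sum_le hM fun m => hfy_bound m ..)
    (fun x => StrongConvexOn.inv_natCast_mul_sum hM fun m => hsc m x)
    (fun _ _ => by
      rw [hHxy_avg]; exact norm_inv_natCast_smul_sum_le hM fun m => hcross_bound m ..)
    (fun _ _ _ _ => by
      rw [hHxy_avg, hHxy_avg]; exact norm_inv_natCast_smul_sum_sub_le hM fun m => hcross_lip m ..)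
    (fun _ _ _ _ => by
      rw [hHyy_avg, hHyy_avg]; exact norm_inv_natCast_smul_sum_sub_le hM fun m => hyy_lip m ..)
    hystar hmin x1 x2

/-- Smoothness of the total objective `F(x) = (1/M) ∑_m f^m(x, y*(x))`:
under `L_f`-Lipschitzness of `∇_x f^m, ∇_y f^m`, `‖∇_y f^m‖ ≤ C_{fy}`,
`‖∇²_{xy} g^m‖ ≤ C_{gxy}`, `L_{gxy}`/`L_{gyy}`-Lipschitzness of `∇²_{xy} g^m`,
`∇²_{yy} g^m` and `∇²_{yy} g^m ⪰ μ I`, the gradient `∇F` is `L`-Lipschitz with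
`L = (L_f + C_{gxy} L_f/μ + C_{fy}(C_{gxy} L_{gyy}/μ² + L_{gxy}/μ))(1 + C_{gxy}/μ)`. -/
theorem total_objective_smooth (d p M : ℕ) (hM : 0 < M)
    (μ Lf Cfy Cgxy Lgxy Lgyy : ℝ) (hμ : 0 < μ) (hLf : 0 ≤ Lf) (hCfy : 0 ≤ Cfy)
    (hCgxy : 0 ≤ Cgxy) (hLgxy : 0 ≤ Lgxy) (hLgyy : 0 ≤ Lgyy)
    (f g : Fin M → EuclideanSpace ℝ (Fin d) → EuclideanSpace ℝ (Fin p) → ℝ)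
    (hf : ∀ m, ContDiff ℝ 1
      (fun q : EuclideanSpace ℝ (Fin d) × EuclideanSpace ℝ (Fin p) => f m q.1 q.2))
    (hg : ∀ m, ContDiff ℝ 2
      (fun q : EuclideanSpace ℝ (Fin d) × EuclideanSpace ℝ (Fin p) => g m q.1 q.2))
    (hfx_lip : ∀ m x1 y1 x2 y2,
      ‖gradient (fun x' => f m x' y1) x1 - gradient (fun x' => f m x' y2) x2‖ ≤
        Lf * Real.sqrt (‖x1 - x2‖ ^ 2 + ‖y1 - y2‖ ^ 2))
    (hfy_lip : ∀ m x1 y1 x2 y2,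
      ‖gradient (fun y' => f m x1 y') y1 - gradient (fun y' => f m x2 y') y2‖ ≤
        Lf * Real.sqrt (‖x1 - x2‖ ^ 2 + ‖y1 - y2‖ ^ 2))
    (hfy_bound : ∀ m x y, ‖gradient (fun y' => f m x y') y‖ ≤ Cfy)
    (hsc : ∀ m x, StrongConvexOn Set.univ μ (fun y => g m x y))
    (Hxy : Fin M → EuclideanSpace ℝ (Fin d) → EuclideanSpace ℝ (Fin p) →
      (EuclideanSpace ℝ (Fin d) →L[ℝ] EuclideanSpace ℝ (Fin p)))
    (hHxy : ∀ m x y, Hxy m x y =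
      fderiv ℝ (fun x' => gradient (fun y' => g m x' y') y) x)
    (Hyy : Fin M → EuclideanSpace ℝ (Fin d) → EuclideanSpace ℝ (Fin p) →
      (EuclideanSpace ℝ (Fin p) →L[ℝ] EuclideanSpace ℝ (Fin p)))
    (hHyy : ∀ m x y, Hyy m x y = fderiv ℝ (gradient (fun y' => g m x y')) y)
    (hcross_bound : ∀ m x y, ‖Hxy m x y‖ ≤ Cgxy)
    (hcross_lip : ∀ m x1 y1 x2 y2, ‖Hxy m x1 y1 - Hxy m x2 y2‖ ≤
      Lgxy * Real.sqrt (‖x1 - x2‖ ^ 2 + ‖y1 - y2‖ ^ 2))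
    (hyy_lip : ∀ m x1 y1 x2 y2, ‖Hyy m x1 y1 - Hyy m x2 y2‖ ≤
      Lgyy * Real.sqrt (‖x1 - x2‖ ^ 2 + ‖y1 - y2‖ ^ 2))
    (ystar : EuclideanSpace ℝ (Fin d) → EuclideanSpace ℝ (Fin p))
    (hystar : Differentiable ℝ ystar)
    (hmin : ∀ x y, (M : ℝ)⁻¹ * ∑ m, g m x (ystar x) ≤ (M : ℝ)⁻¹ * ∑ m, g m x y) :
    ∀ x1 x2,
      ‖gradient (fun x => (M : ℝ)⁻¹ * ∑ m, f m x (ystar x)) x1 -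
        gradient (fun x => (M : ℝ)⁻¹ * ∑ m, f m x (ystar x)) x2‖ ≤
      (Lf + Cgxy * Lf / μ + Cfy * (Cgxy * Lgyy / μ ^ 2 + Lgxy / μ)) * (1 + Cgxy / μ) *
        ‖x1 - x2‖ :=
  total_objective_smooth_general d p M hM μ Lf Cfy Cgxy Lgxy Lgyy hμ hLf hLgxy hLgyy f g hf hg
    hfx_lip hfy_lip hfy_bound hsc Hxy hHxy Hyy hHyy hcross_bound hcross_lip hyy_lip ystar hystar
    hmin
end

section
/- Let F : R^d → R be L-smooth and bounded below, and consider the update x̄_{t+1} = x̄_t + η_t(x̂_{t+1} - x̄_t) where x̂_{t+1} = argmin_{x} {⟨w̄_t, x⟩ + (1/(2γ))(x - x̄_t)^T A_t (x - x̄_t)} with A_t ⪰ ρ I_d. Then for 0 < η_t ≤ 1 and 0 < γ ≤ ρ/(2Lη_t): F(x̄_{t+1}) ≤ F(x̄_t) + (γη_t/ρ)||∇F(x̄_t) - w̄_t||² - (ρη_t/(2γ))||x̂_{t+1} - x̄_t||². -/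
open scoped RealInnerProductSpace

/-!
The descent lemma for an `L`-smooth `F` bounds `F (x̄ + η s)`, `s = x̂ - x̄`, by
`F x̄ + η ⟪∇F x̄, s⟫ + L η² ‖s‖² / 2`. Split `⟪∇F x̄, s⟫ = ⟪∇F x̄ - w, s⟫ + ⟪w, s⟫`: Young's
inequality bounds the first term by `γ/ρ ‖∇F x̄ - w‖² + ρ/(4γ) ‖s‖²`, and the optimality condition
`A s = -γ w` together with `A ⪰ ρ` gives `⟪w, s⟫ ≤ -ρ/γ ‖s‖²`. The step-size condition
`2 L η γ ≤ ρ` lets the remaining `-3ρη/(4γ) ‖s‖²` absorb the curvature term `L η² ‖s‖² / 2`.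
-/

section

variable {E : Type*} [NormedAddCommGroup E] [InnerProductSpace ℝ E]

theorem real_inner_le_mul_norm_sq_add_norm_sq_div {c : ℝ} (hc : 0 < c) (a b : E) :
    ⟪a, b⟫ ≤ c * ‖a‖ ^ 2 + ‖b‖ ^ 2 / (4 * c) := by
  have h : 0 ≤ ‖(2 * c) • a - b‖ ^ 2 := by positivity
  rw [norm_sub_sq_real, norm_smul, real_inner_smul_left, Real.norm_of_nonneg (by positivity)] at h
  rw [← sub_nonneg]
  have hform : c * ‖a‖ ^ 2 + ‖b‖ ^ 2 / (4 * c) - ⟪a, b⟫ =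
      ((2 * c * ‖a‖) ^ 2 - 2 * (2 * c * ⟪a, b⟫) + ‖b‖ ^ 2) / (4 * c) := by
    field_simp
    ring
  rw [hform]
  positivity

theorem inner_sub_le_of_apply_eq_sub_smul {A : E →L[ℝ] E} {ρ γ : ℝ} (hγ : 0 < γ)
    (hApos : ∀ v, ρ * ‖v‖ ^ 2 ≤ ⟪v, A v⟫) {w xbar xhat : E}
    (hxhat : A xhat = A xbar - γ • w) :
    ⟪w, xhat - xbar⟫ ≤ -(ρ / γ * ‖xhat - xbar‖ ^ 2) := by
  have hw : w = -γ⁻¹ • A (xhat - xbar) := by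
    rw [map_sub, hxhat, sub_sub_cancel_left, smul_neg, neg_smul, neg_neg, inv_smul_smul₀ hγ.ne']
  rw [hw, real_inner_smul_left, real_inner_comm, neg_mul, neg_le_neg_iff, div_eq_inv_mul, mul_assoc]
  exact mul_le_mul_of_nonneg_left (hApos _) (inv_nonneg.mpr hγ.le)

theorem HasGradientAt.hasDerivAt_comp_add_smul [CompleteSpace E] {F : E → ℝ} {x v g : E} {t : ℝ}
    (hF : HasGradientAt F g (x + t • v)) :
    HasDerivAt (fun s : ℝ => F (x + s • v)) ⟪g, v⟫ t := by
  have hline : HasDerivAt (fun s : ℝ => x + s • v) v t := by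
    simpa using ((hasDerivAt_id t).smul_const v).const_add x
  exact hF.hasFDerivAt.comp_hasDerivAt t hline

theorem image_add_le_of_lipschitz_gradient [CompleteSpace E] {F : E → ℝ} {L : ℝ}
    (hF : Differentiable ℝ F)
    (hsmooth : ∀ x y, ‖gradient F x - gradient F y‖ ≤ L * ‖x - y‖) (x v : E) :
    F (x + v) ≤ F x + ⟪gradient F x, v⟫ + L / 2 * ‖v‖ ^ 2 := by
  set φ : ℝ → ℝ := fun t => F (x + t • v) - (t * ⟪gradient F x, v⟫ + L / 2 * t ^ 2 * ‖v‖ ^ 2)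
  have hφ : ∀ t, HasDerivAt φ
      (⟪gradient F (x + t • v), v⟫ - (⟪gradient F x, v⟫ + L * t * ‖v‖ ^ 2)) t := by
    intro t
    have hpoly : HasDerivAt (fun t : ℝ => t * ⟪gradient F x, v⟫ + L / 2 * t ^ 2 * ‖v‖ ^ 2)
        (⟪gradient F x, v⟫ + L * t * ‖v‖ ^ 2) t := by
      refine (((hasDerivAt_id t).mul_const ⟪gradient F x, v⟫).add
        (((hasDerivAt_pow 2 t).const_mul (L / 2)).mul_const (‖v‖ ^ 2))).congr_deriv ?_
      push_cast
      ring
    exact ((hF _).hasGradientAt.hasDerivAt_comp_add_smul).sub hpoly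
  have hφ' : ∀ t ∈ interior (Set.Ici (0 : ℝ)),
      ⟪gradient F (x + t • v), v⟫ - (⟪gradient F x, v⟫ + L * t * ‖v‖ ^ 2) ≤ 0 := by
    intro t ht
    rw [interior_Ici, Set.mem_Ioi] at ht
    have hgrad : ⟪gradient F (x + t • v) - gradient F x, v⟫ ≤ L * t * ‖v‖ ^ 2 := calc
      _ ≤ ‖gradient F (x + t • v) - gradient F x‖ * ‖v‖ := real_inner_le_norm _ _
      _ ≤ L * ‖(x + t • v) - x‖ * ‖v‖ := by gcongr; exact hsmooth _ _
      _ = L * t * ‖v‖ ^ 2 := by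
        rw [add_sub_cancel_left, norm_smul, Real.norm_of_nonneg ht.le]; ring
    rw [inner_sub_left] at hgrad
    linarith
  have hanti : AntitoneOn φ (Set.Ici 0) :=
    antitoneOn_of_hasDerivWithinAt_nonpos (convex_Ici 0)
      (fun t _ => (hφ t).continuousAt.continuousWithinAt)
      (fun t _ => (hφ t).hasDerivWithinAt) hφ'
  have := hanti Set.self_mem_Ici (Set.mem_Ici.mpr zero_le_one) zero_le_one
  simp only [φ, zero_smul, add_zero, one_smul] at this
  linarith

end

theorem adaptive_descent_step_general (d : ℕ) (F : EuclideanSpace ℝ (Fin d) → ℝ)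
    (L ρ γ η : ℝ) (hL : 0 < L) (hρ : 0 < ρ)
    (hF : Differentiable ℝ F)
    (hsmooth : ∀ x1 x2, ‖gradient F x1 - gradient F x2‖ ≤ L * ‖x1 - x2‖)
    (A : EuclideanSpace ℝ (Fin d) →L[ℝ] EuclideanSpace ℝ (Fin d))
    (hApos : ∀ v, ρ * ‖v‖ ^ 2 ≤ ⟪v, A v⟫)
    (w xbar xhat xnext : EuclideanSpace ℝ (Fin d))
    (hη : 0 < η) (hγ : 0 < γ) (hγ2 : γ ≤ ρ / (2 * L * η))
    (hxhat : A xhat = A xbar - γ • w)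
    (hxnext : xnext = xbar + η • (xhat - xbar)) :
    F xnext ≤ F xbar + (γ * η / ρ) * ‖gradient F xbar - w‖ ^ 2 -
      (ρ * η / (2 * γ)) * ‖xhat - xbar‖ ^ 2 := by
  have hstep := inner_sub_le_of_apply_eq_sub_smul hγ hApos hxhat
  set s := xhat - xbar
  set g := gradient F xbar
  have hdescent : F xnext ≤ F xbar + η * ⟪g, s⟫ + L / 2 * η ^ 2 * ‖s‖ ^ 2 := by
    have := image_add_le_of_lipschitz_gradient hF hsmooth xbar (η • s)
    rwa [real_inner_smul_right, norm_smul, Real.norm_of_nonneg hη.le, mul_pow, ← mul_assoc,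
      ← hxnext] at this
  have hyoung := real_inner_le_mul_norm_sq_add_norm_sq_div (div_pos hγ hρ) (g - w) s
  have hLη : L * η ≤ ρ / (2 * γ) := by
    rw [le_div_iff₀ (by positivity)]
    rw [le_div_iff₀ (by positivity)] at hγ2
    linarith
  have hinner : ⟪g, s⟫ ≤ γ / ρ * ‖g - w‖ ^ 2 - 3 * ρ / (4 * γ) * ‖s‖ ^ 2 := by
    have hsplit : ⟪g, s⟫ = ⟪g - w, s⟫ + ⟪w, s⟫ := by rw [inner_sub_left]; ring
    rw [mul_div_assoc', div_div_eq_mul_div] at hyoung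
    linear_combination hsplit + hyoung + hstep
  linear_combination hdescent + η * hinner + (η * ‖s‖ ^ 2 / 2) * hLη

/-- One-step descent for an adaptive mirror step: with `F` `L`-smooth and bounded
below, `A ⪰ ρ I` symmetric positive definite, the solution
`x̂ = argmin_x {⟨w, x⟩ + (1/(2γ))(x - x̄)ᵀ A (x - x̄)}`, i.e. `A x̂ = A x̄ - γ w`,
and the update `x⁺ = x̄ + η (x̂ - x̄)`, for `0 < η ≤ 1` and `0 < γ ≤ ρ/(2Lη)`:
`F(x⁺) ≤ F(x̄) + (γη/ρ)‖∇F(x̄) - w‖² - (ρη/(2γ))‖x̂ - x̄‖²`. -/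
theorem adaptive_descent_step (d : ℕ) (F : EuclideanSpace ℝ (Fin d) → ℝ)
    (L ρ γ η : ℝ) (hL : 0 < L) (hρ : 0 < ρ)
    (hF : Differentiable ℝ F)
    (hsmooth : ∀ x1 x2, ‖gradient F x1 - gradient F x2‖ ≤ L * ‖x1 - x2‖)
    (hbdd : ∃ b, ∀ x, b ≤ F x)
    (A : EuclideanSpace ℝ (Fin d) →L[ℝ] EuclideanSpace ℝ (Fin d))
    (hA : IsSelfAdjoint A)
    (hApos : ∀ v, ρ * ‖v‖ ^ 2 ≤ ⟪v, A v⟫)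
    (w xbar xhat xnext : EuclideanSpace ℝ (Fin d))
    (hη : 0 < η) (hη1 : η ≤ 1) (hγ : 0 < γ) (hγ2 : γ ≤ ρ / (2 * L * η))
    (hxhat : A xhat = A xbar - γ • w)
    (hxnext : xnext = xbar + η • (xhat - xbar)) :
    F xnext ≤ F xbar + (γ * η / ρ) * ‖gradient F xbar - w‖ ^ 2 -
      (ρ * η / (2 * γ)) * ‖xhat - xbar‖ ^ 2 :=
  adaptive_descent_step_general d F L ρ γ η hL hρ hF hsmooth A hApos w xbar xhat xnext hη hγ hγ2
    hxhat hxnext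
end

section
/- Let g(x,·) be μ-strongly convex and L_g-smooth with minimizer y*(x), and consider the updates ŷ_{t+1} = ȳ_t - (λ/b_t) v̄_t and ȳ_{t+1} = ȳ_t + η_t(ŷ_{t+1} - ȳ_t), where b_t ≥ ρ > 0, 0 < η_t ≤ 1, 0 < λ ≤ ρ/(6L_g), and y* is κ-Lipschitz. Then, with x̄_{t+1} = x̄_t + η_t(x̂_{t+1} - x̄_t): ||ȳ_{t+1} - y*(x̄_{t+1})||² ≤ (1 - η_t μλ/(4b_t))||ȳ_t - y*(x̄_t)||² - (3η_t/4)||ŷ_{t+1} - ȳ_t||² + (25η_t λ/(6μb_t))||∇_y g(x̄_t, ȳ_t) - v̄_t||² + (25κ²η_t b_t/(6μλ))||x̂_{t+1} - x̄_t||². -/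
/-!
Restricted to the segment between two points, a differentiable convex function lies above its
tangent, and a function with `L`-Lipschitz derivative lies below its tangent plus `L/2‖·‖²`.
Applied to `g(x̄, ·)` at `ȳ` these two bounds, together with optimality of `y*(x̄)` and the
polarization identity for `λ/b · v̄ = ȳ - ŷ`, give a contraction of the gradient step
toward `y*(x̄)` up to an error `2 (λ/b) ⟪∇g - v̄, ŷ - y*⟫`, which Young's inequality splits
between the contraction and the step length. The relaxation by `η` is a convex combination,
and moving the target from `y*(x̄)` to `y*(x̄⁺)`, at distance at most `κ η ‖x̂ - x̄‖`, costs one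
more Young inequality with weight `η μ λ/(4b)`.
-/

open Set AffineMap
open scoped RealInnerProductSpace

section NormedSpace

variable {E : Type*} [NormedAddCommGroup E] [NormedSpace ℝ E] {f : E → ℝ} {a : E}

theorem ConvexOn.add_fderiv_sub_le {f' : E →L[ℝ] ℝ} (hc : ConvexOn ℝ univ f)
    (hf : HasFDerivAt f f' a) (b : E) : f a + f' (b - a) ≤ f b := by
  let ℓ : ℝ →ᵃ[ℝ] E := lineMap a b
  have hline : ConvexOn ℝ univ (f ∘ ℓ) := hc.comp_affineMap ℓ
  have hd : HasDerivAt (f ∘ ℓ) (f' (b - a)) 0 :=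
    (lineMap_apply_zero a b (k := ℝ) ▸ hf).comp_hasDerivAt _ hasDerivAt_lineMap
  have := hline.le_slope_of_hasDerivAt (mem_univ 0) (mem_univ 1) one_pos hd
  simp only [slope_def_field, Function.comp_apply, ℓ, lineMap_apply_zero, lineMap_apply_one,
    sub_zero, div_one] at this
  linarith

theorem le_add_fderiv_sub_add_sq_of_lipschitz {L : ℝ} {f' : E → E →L[ℝ] ℝ}
    (hf : ∀ x, HasFDerivAt f (f' x) x) (hL : ∀ x y, ‖f' x - f' y‖ ≤ L * ‖x - y‖) (b : E) :
    f b ≤ f a + f' a (b - a) + L / 2 * ‖b - a‖ ^ 2 := by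
  let F : ℝ → ℝ := fun t => f (lineMap a b t) - t * f' a (b - a) - L / 2 * t ^ 2 * ‖b - a‖ ^ 2
  have hF (t : ℝ) : HasDerivAt F
      ((f' (lineMap a b t) - f' a) (b - a) - L * t * ‖b - a‖ ^ 2) t := by
    have := (((hf _).comp_hasDerivAt t (hasDerivAt_lineMap (a := a) (b := b))).sub
      ((hasDerivAt_id t).mul_const (f' a (b - a)))).sub
      (((hasDerivAt_pow 2 t).const_mul (L / 2)).mul_const (‖b - a‖ ^ 2))
    refine this.congr_deriv ?_
    simp only [sub_apply]
    ring
  have hF' : ∀ t ∈ interior (Icc (0 : ℝ) 1),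
      (f' (lineMap a b t) - f' a) (b - a) - L * t * ‖b - a‖ ^ 2 ≤ 0 := by
    intro t ht
    rw [interior_Icc] at ht
    have hdist : ‖lineMap a b t - a‖ = t * ‖b - a‖ := by
      rw [lineMap_apply_module', add_sub_cancel_right, norm_smul, Real.norm_of_nonneg ht.1.le]
    rw [sub_nonpos]
    calc (f' (lineMap a b t) - f' a) (b - a)
        ≤ ‖f' (lineMap a b t) - f' a‖ * ‖b - a‖ := le_of_abs_le ((f' _ - f' a).le_opNorm _)
      _ ≤ L * ‖lineMap a b t - a‖ * ‖b - a‖ := by gcongr; exact hL _ _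
      _ = L * t * ‖b - a‖ ^ 2 := by rw [hdist]; ring
  have hanti : AntitoneOn F (Icc 0 1) :=
    antitoneOn_of_hasDerivWithinAt_nonpos (convex_Icc 0 1)
      (HasDerivAt.continuousOn fun t _ => hF t) (fun t _ => (hF t).hasDerivWithinAt) hF'
  have := hanti (left_mem_Icc.2 zero_le_one) (right_mem_Icc.2 zero_le_one) zero_le_one
  simp only [F, lineMap_apply_zero, lineMap_apply_one] at this
  linarith

end NormedSpace

section InnerProductSpace

variable {E : Type*} [NormedAddCommGroup E] [InnerProductSpace ℝ E] {f : E → ℝ} {a : E}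

theorem StrongConvexOn.add_fderiv_sub_add_sq_le {m : ℝ} {f' : E →L[ℝ] ℝ}
    (hc : StrongConvexOn univ m f) (hf : HasFDerivAt f f' a) (b : E) :
    f a + f' (b - a) + m / 2 * ‖b - a‖ ^ 2 ≤ f b := by
  have hq := ((hasStrictFDerivAt_norm_sq a).hasFDerivAt.const_mul (m / 2))
  have := (strongConvexOn_iff_convex.mp hc).add_fderiv_sub_le (hf.sub hq) b
  simp only [sub_apply, smul_apply, innerSL_apply_apply, smul_eq_mul, nsmul_eq_mul,
    inner_sub_right, real_inner_self_eq_norm_sq] at this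
  rw [norm_sub_sq_real, real_inner_comm]
  push_cast at this
  linarith

theorem norm_add_smul_sub_sub_sq (x y z : E) (η : ℝ) :
    ‖x + η • (y - x) - z‖ ^ 2
      = (1 - η) * ‖x - z‖ ^ 2 + η * ‖y - z‖ ^ 2 - η * (1 - η) * ‖y - x‖ ^ 2 := by
  rw [show x + η • (y - x) - z = (x - z) + η • ((y - z) - (x - z)) by abel_nf,
    show y - x = (y - z) - (x - z) by abel]
  generalize x - z = p, y - z = q
  simp only [norm_add_sq_real, norm_smul, inner_smul_right, mul_pow, Real.norm_eq_abs, sq_abs,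
    norm_sub_sq_real, inner_sub_right, real_inner_self_eq_norm_sq, real_inner_comm p]
  ring

end InnerProductSpace

section SeminormedAddGroup

variable {E : Type*} [SeminormedAddGroup E]

theorem norm_add_sq_le_one_add_mul (x y : E) {c : ℝ} (hc : 0 < c) :
    ‖x + y‖ ^ 2 ≤ (1 + c) * ‖x‖ ^ 2 + (1 + c⁻¹) * ‖y‖ ^ 2 := by
  have htri : ‖x + y‖ ^ 2 ≤ (‖x‖ + ‖y‖) ^ 2 := by gcongr; exact norm_add_le x y
  have hsq : c * ‖x‖ ^ 2 + c⁻¹ * ‖y‖ ^ 2 - 2 * ‖x‖ * ‖y‖ = c⁻¹ * (c * ‖x‖ - ‖y‖) ^ 2 := by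
    field_simp
    ring
  nlinarith [mul_nonneg (inv_nonneg.2 hc.le) (sq_nonneg (c * ‖x‖ - ‖y‖))]

theorem norm_sub_sq_le_of_moving_target {y z z' : E}
    {t e D W δ : ℝ} (ht : 0 < t) (ht6 : t ≤ 1 / 6) (he : 0 ≤ e) (hD : 0 ≤ D) (hW : 0 ≤ W)
    (hy : ‖y - z‖ ^ 2 ≤ (1 - t / 2) * e - D + W) (hz : ‖z - z'‖ ≤ δ) :
    ‖y - z'‖ ^ 2 ≤ (1 - t / 4) * e - D + 25 / 24 * W + 25 / (6 * t) * δ ^ 2 := by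
  have hyoung := norm_add_sq_le_one_add_mul (y - z) (z - z') (by positivity : 0 < t / 4)
  rw [sub_add_sub_cancel, inv_div] at hyoung
  have hδ : ‖z - z'‖ ^ 2 ≤ δ ^ 2 := pow_le_pow_left₀ (norm_nonneg _) hz 2
  have hcoef : 1 + 4 / t ≤ 25 / (6 * t) := by
    have : 25 / (6 * t) - (1 + 4 / t) = (1 - 6 * t) / (6 * t) := by
      field_simp
      ring
    linarith [div_nonneg (by linarith : 0 ≤ 1 - 6 * t) (by positivity : 0 ≤ 6 * t)]
  linear_combination hyoung + mul_le_mul_of_nonneg_left hy (by positivity : 0 ≤ 1 + t / 4)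
    + mul_le_mul hcoef hδ (sq_nonneg _) (by positivity)
    + 1 / 8 * mul_nonneg (sq_nonneg t) he + 1 / 4 * mul_nonneg ht.le hD
    + 1 / 4 * mul_nonneg (sub_nonneg.2 ht6) hW

end SeminormedAddGroup

section GradientStep

open InnerProductSpace
open scoped Gradient

variable {E : Type*} [NormedAddCommGroup E] [InnerProductSpace ℝ E] [CompleteSpace E] {f : E → ℝ}

theorem norm_sub_sq_le_of_gradient_step {μ L s : ℝ} {z y ŷ v : E} (hs : 0 < s)
    (hf : Differentiable ℝ f) (hc : StrongConvexOn univ μ f)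
    (hL : ∀ x x', ‖∇ f x - ∇ f x'‖ ≤ L * ‖x - x'‖) (hz : ∀ x, f z ≤ f x)
    (hŷ : ŷ = y - s • v) :
    ‖ŷ - z‖ ^ 2 ≤ (1 - s * μ) * ‖y - z‖ ^ 2 - (1 - s * L) * ‖ŷ - y‖ ^ 2
      + 2 * s * ⟪∇ f y - v, ŷ - z⟫_ℝ := by
  have hderiv (x : E) : HasFDerivAt f (toDual ℝ E (∇ f x)) x :=
    hasGradientAt_iff_hasFDerivAt.mp (hf x).hasGradientAt
  have hdescent : f ŷ ≤ f y + ⟪∇ f y, ŷ - y⟫_ℝ + L / 2 * ‖ŷ - y‖ ^ 2 := by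
    simpa only [toDual_apply_apply] using le_add_fderiv_sub_add_sq_of_lipschitz hderiv
      (fun x x' => by rw [← map_sub, LinearIsometryEquiv.norm_map]; exact hL x x') ŷ
  have hstrong : f y + ⟪∇ f y, z - y⟫_ℝ + μ / 2 * ‖z - y‖ ^ 2 ≤ f z := by
    simpa only [toDual_apply_apply] using hc.add_fderiv_sub_add_sq_le (hderiv y) z
  have hgap : 0 ≤ 2 * ⟪∇ f y, ŷ - z⟫_ℝ + L * ‖ŷ - y‖ ^ 2 - μ * ‖y - z‖ ^ 2 := by
    rw [show ŷ - z = (ŷ - y) - (z - y) by abel, inner_sub_right, norm_sub_rev y]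
    linarith [hz ŷ]
  have hpolar : 2 * s * ⟪v, ŷ - z⟫_ℝ = ‖y - z‖ ^ 2 - ‖ŷ - y‖ ^ 2 - ‖ŷ - z‖ ^ 2 := by
    rw [mul_assoc, ← real_inner_smul_left, show s • v = y - ŷ by rw [hŷ]; abel,
      show y - z = (y - ŷ) + (ŷ - z) by abel, norm_add_sq_real, norm_sub_rev y ŷ]
    ring
  rw [inner_sub_left, mul_sub, hpolar]
  linear_combination s * hgap

theorem norm_sub_sq_le_of_inexact_gradient_step {μ L s : ℝ} {z y ŷ v : E} (hμ : 0 < μ)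
    (hμL : μ ≤ L) (hs : 0 < s) (hsL : s * L ≤ 1 / 6)
    (hf : Differentiable ℝ f) (hc : StrongConvexOn univ μ f)
    (hL : ∀ x x', ‖∇ f x - ∇ f x'‖ ≤ L * ‖x - x'‖) (hz : ∀ x, f z ≤ f x)
    (hŷ : ŷ = y - s • v) :
    ‖ŷ - z‖ ^ 2 ≤ (1 - s * μ / 2) * ‖y - z‖ ^ 2 - 3 / 4 * ‖ŷ - y‖ ^ 2
      + 4 * s / μ * ‖∇ f y - v‖ ^ 2 := by
  have hexact := norm_sub_sq_le_of_gradient_step hs hf hc hL hz hŷ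
  set w := ∇ f y - v
  have hsμ : s * μ ≤ 1 / 6 := (mul_le_mul_of_nonneg_left hμL hs.le).trans hsL
  have hcs : ⟪w, ŷ - z⟫_ℝ ≤ ‖w‖ * ‖y - z‖ + ‖w‖ * ‖ŷ - y‖ := by
    rw [show ŷ - z = (y - z) + (ŷ - y) by abel, inner_add_right]
    exact add_le_add (real_inner_le_norm _ _) (real_inner_le_norm _ _)
  -- Young's inequality charges the error once to `s μ/2 ‖y - z‖²` and once to `‖ŷ - y‖²/12`.
  have hyoung₁ : 2 * s * (‖w‖ * ‖y - z‖) ≤ s * μ / 2 * ‖y - z‖ ^ 2 + 2 * s / μ * ‖w‖ ^ 2 := by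
    have : s * μ / 2 * ‖y - z‖ ^ 2 + 2 * s / μ * ‖w‖ ^ 2 - 2 * s * (‖w‖ * ‖y - z‖)
        = s / (2 * μ) * (μ * ‖y - z‖ - 2 * ‖w‖) ^ 2 := by
      field_simp
      ring
    nlinarith [mul_nonneg (by positivity : 0 ≤ s / (2 * μ)) (sq_nonneg (μ * ‖y - z‖ - 2 * ‖w‖))]
  have hyoung₂ : 2 * s * (‖w‖ * ‖ŷ - y‖) ≤ 1 / 12 * ‖ŷ - y‖ ^ 2 + 2 * s / μ * ‖w‖ ^ 2 := by
    have h12 : 12 * s ^ 2 ≤ 2 * s / μ := by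
      rw [le_div_iff₀ hμ]; nlinarith
    nlinarith [sq_nonneg (‖ŷ - y‖ - 12 * s * ‖w‖), mul_le_mul_of_nonneg_right h12 (sq_nonneg ‖w‖)]
  linear_combination hexact + mul_le_mul_of_nonneg_left hcs (by positivity : (0:ℝ) ≤ 2 * s)
    + mul_le_mul_of_nonneg_right hsL (sq_nonneg ‖ŷ - y‖) + hyoung₁ + hyoung₂

theorem norm_relaxed_gradient_step_sub_sq_le {μ L s η : ℝ} {z y ŷ v : E} (hμ : 0 < μ)
    (hμL : μ ≤ L) (hs : 0 < s) (hsL : s * L ≤ 1 / 6)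
    (hf : Differentiable ℝ f) (hc : StrongConvexOn univ μ f)
    (hL : ∀ x x', ‖∇ f x - ∇ f x'‖ ≤ L * ‖x - x'‖) (hz : ∀ x, f z ≤ f x)
    (hŷ : ŷ = y - s • v) (hη : 0 ≤ η) (hη1 : η ≤ 1) :
    ‖y + η • (ŷ - y) - z‖ ^ 2 ≤ (1 - η * s * μ / 2) * ‖y - z‖ ^ 2 - 3 * η / 4 * ‖ŷ - y‖ ^ 2
      + 4 * η * s / μ * ‖∇ f y - v‖ ^ 2 := by
  rw [norm_add_smul_sub_sub_sq]
  have hstep := norm_sub_sq_le_of_inexact_gradient_step hμ hμL hs hsL hf hc hL hz hŷ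
  linear_combination mul_le_mul_of_nonneg_left hstep hη
    + mul_nonneg (mul_nonneg hη (sub_nonneg.2 hη1)) (sq_nonneg ‖ŷ - y‖)

end GradientStep

theorem lower_level_contraction_general (d p : ℕ)
    (g : EuclideanSpace ℝ (Fin d) → EuclideanSpace ℝ (Fin p) → ℝ)
    (μ Lg κ ρ lam η b : ℝ)
    (hμ : 0 < μ) (hμL : μ ≤ Lg)
    (hρ : 0 < ρ) (hb : ρ ≤ b) (hη : 0 < η) (hη1 : η ≤ 1)
    (hlam : 0 < lam) (hlam2 : lam ≤ ρ / (6 * Lg))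
    (hdiff : ∀ x, Differentiable ℝ (fun y => g x y))
    (hsc : ∀ x, StrongConvexOn Set.univ μ (fun y => g x y))
    (hsmooth : ∀ x y1 y2,
      ‖gradient (fun y => g x y) y1 - gradient (fun y => g x y) y2‖ ≤ Lg * ‖y1 - y2‖)
    (ystar : EuclideanSpace ℝ (Fin d) → EuclideanSpace ℝ (Fin p))
    (hmin : ∀ x y, g x (ystar x) ≤ g x y)
    (hylip : ∀ x1 x2, ‖ystar x1 - ystar x2‖ ≤ κ * ‖x1 - x2‖)
    (xbar xhat xnext : EuclideanSpace ℝ (Fin d))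
    (ybar yhat ynext v : EuclideanSpace ℝ (Fin p))
    (hyhat : yhat = ybar - (lam / b) • v)
    (hynext : ynext = ybar + η • (yhat - ybar))
    (hxnext : xnext = xbar + η • (xhat - xbar)) :
    ‖ynext - ystar xnext‖ ^ 2 ≤
      (1 - η * μ * lam / (4 * b)) * ‖ybar - ystar xbar‖ ^ 2 -
      (3 * η / 4) * ‖yhat - ybar‖ ^ 2 +
      (25 * η * lam / (6 * μ * b)) * ‖gradient (fun y => g xbar y) ybar - v‖ ^ 2 +
      (25 * κ ^ 2 * η * b / (6 * μ * lam)) * ‖xhat - xbar‖ ^ 2 := by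
  have hb0 : 0 < b := hρ.trans_le hb
  have hs : 0 < lam / b := div_pos hlam hb0
  have hsL : lam / b * Lg ≤ 1 / 6 := by
    have := (le_div_iff₀ (by linarith)).mp hlam2
    rw [div_mul_eq_mul_div, div_le_iff₀ hb0]
    linarith
  have ht : η * (lam / b) * μ ≤ 1 / 6 := by
    have := mul_le_mul hη1 (mul_le_mul_of_nonneg_left hμL hs.le) (by positivity) zero_le_one
    linarith
  have hstep := norm_relaxed_gradient_step_sub_sq_le hμ hμL hs hsL (hdiff xbar) (hsc xbar)
    (hsmooth xbar) (hmin xbar) hyhat hη.le hη1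
  rw [← hynext] at hstep
  have hdrift : ‖ystar xbar - ystar xnext‖ ≤ κ * η * ‖xhat - xbar‖ := by
    calc _ ≤ κ * ‖xbar - xnext‖ := hylip _ _
      _ = _ := by
        rw [hxnext, sub_add_cancel_left, norm_neg, norm_smul, Real.norm_of_nonneg hη.le, mul_assoc]
  refine (norm_sub_sq_le_of_moving_target (t := η * (lam / b) * μ) (by positivity) ht
    (sq_nonneg _) (by positivity) (by positivity) hstep hdrift).trans_eq ?_
  field_simp
  ring

/-- One-step contraction of the lower-level iterate toward the moving minimizer
`y*(x)`: with `g(x,·)` `μ`-strongly convex and `L_g`-smooth, `y*` `κ`-Lipschitz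
(`κ = L_g/μ`), updates `ŷ = ȳ - (λ/b) v̄`, `ȳ⁺ = ȳ + η(ŷ - ȳ)`,
`x̄⁺ = x̄ + η(x̂ - x̄)`, and `ρ ≤ b`, `0 < η ≤ 1`, `0 < λ ≤ ρ/(6L_g)`:
`‖ȳ⁺ - y*(x̄⁺)‖² ≤ (1 - ημλ/(4b))‖ȳ - y*(x̄)‖² - (3η/4)‖ŷ - ȳ‖²
  + (25ηλ/(6μb))‖∇_y g(x̄,ȳ) - v̄‖² + (25κ²ηb/(6μλ))‖x̂ - x̄‖²`. -/
theorem lower_level_contraction (d p : ℕ)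
    (g : EuclideanSpace ℝ (Fin d) → EuclideanSpace ℝ (Fin p) → ℝ)
    (μ Lg κ ρ lam η b : ℝ)
    (hμ : 0 < μ) (hμL : μ ≤ Lg) (hκ : κ = Lg / μ)
    (hρ : 0 < ρ) (hb : ρ ≤ b) (hη : 0 < η) (hη1 : η ≤ 1)
    (hlam : 0 < lam) (hlam2 : lam ≤ ρ / (6 * Lg))
    (hdiff : ∀ x, Differentiable ℝ (fun y => g x y))
    (hsc : ∀ x, StrongConvexOn Set.univ μ (fun y => g x y))
    (hsmooth : ∀ x y1 y2,
      ‖gradient (fun y => g x y) y1 - gradient (fun y => g x y) y2‖ ≤ Lg * ‖y1 - y2‖)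
    (ystar : EuclideanSpace ℝ (Fin d) → EuclideanSpace ℝ (Fin p))
    (hmin : ∀ x y, g x (ystar x) ≤ g x y)
    (hylip : ∀ x1 x2, ‖ystar x1 - ystar x2‖ ≤ κ * ‖x1 - x2‖)
    (xbar xhat xnext : EuclideanSpace ℝ (Fin d))
    (ybar yhat ynext v : EuclideanSpace ℝ (Fin p))
    (hyhat : yhat = ybar - (lam / b) • v)
    (hynext : ynext = ybar + η • (yhat - ybar))
    (hxnext : xnext = xbar + η • (xhat - xbar)) :
    ‖ynext - ystar xnext‖ ^ 2 ≤
      (1 - η * μ * lam / (4 * b)) * ‖ybar - ystar xbar‖ ^ 2 -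
      (3 * η / 4) * ‖yhat - ybar‖ ^ 2 +
      (25 * η * lam / (6 * μ * b)) * ‖gradient (fun y => g xbar y) ybar - v‖ ^ 2 +
      (25 * κ ^ 2 * η * b / (6 * μ * lam)) * ‖xhat - xbar‖ ^ 2 :=
  lower_level_contraction_general d p g μ Lg κ ρ lam η b hμ hμL hρ hb hη hη1 hlam hlam2 hdiff hsc
    hsmooth ystar hmin hylip xbar xhat xnext ybar yhat ynext v hyhat hynext hxnext
end

section
/- Consider the one-step contraction toward the lower-level minimizer: if g(x̄_t, ·) is μ-strongly convex and L_g-smooth, ŷ_{t+1} = argmin_y {⟨v̄_t, y⟩ + (b_t/(2λ))||y - ȳ_t||²}, ȳ_{t+1} = ȳ_t + η_t(ŷ_{t+1} - ȳ_t), 0 < η_t ≤ 1, and 0 < λ ≤ b_t/(6L_g), then ||ȳ_{t+1} - y*(x̄_t)||² ≤ (1 - η_t μλ/(2b_t))||ȳ_t - y*(x̄_t)||² - (3η_t/4)||ŷ_{t+1} - ȳ_t||² + (4η_t λ/(μ b_t))||∇_y g(x̄_t, ȳ_t) - v̄_t||². -/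
open Set InnerProductSpace RealInnerProductSpace

set_option linter.unusedSectionVars false
variable {E : Type*} [NormedAddCommGroup E] [InnerProductSpace ℝ E] [CompleteSpace E]

lemma inner_gradient_eq_fderiv' (f : E → ℝ) (x v : E) :
    ⟪gradient f x, v⟫_ℝ = fderiv ℝ f x v := by
  rw [gradient, ← InnerProductSpace.toDual_apply_apply, LinearIsometryEquiv.apply_symm_apply]

lemma hasDerivAt_line' (y z : E) (t : ℝ) :
    HasDerivAt (fun t : ℝ => y + t • (z - y)) (z - y) t := by
  simpa using ((hasDerivAt_id t).smul_const (z - y)).const_add y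

lemma convexOn_comp_line' {f : E → ℝ} (hf : ConvexOn ℝ Set.univ f) (y z : E) :
    ConvexOn ℝ Set.univ fun t : ℝ => f (y + t • (z - y)) := by
  refine ⟨convex_univ, fun s _ t _ a c ha hc hac => ?_⟩
  have h1 : y + (a • s + c • t) • (z - y)
      = a • (y + s • (z - y)) + c • (y + t • (z - y)) := by
    obtain rfl : c = 1 - a := by linarith
    simp only [smul_eq_mul]
    module
  simp only []
  rw [h1]
  exact hf.2 (mem_univ _) (mem_univ _) ha hc hac

lemma convexOn_le_of_hasDerivAt_zero' {ψ : ℝ → ℝ} {c : ℝ}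
    (hc : ConvexOn ℝ Set.univ ψ) (hd : HasDerivAt ψ c 0) : ψ 0 + c ≤ ψ 1 := by
  have h := hc.le_slope_of_hasDerivWithinAt_Ioi (mem_univ (0:ℝ)) (mem_univ 1) one_pos
    hd.hasDerivWithinAt
  rw [slope_def_field] at h
  norm_num at h
  linarith

lemma convexOn_grad_le' {f : E → ℝ} (hf : ConvexOn ℝ Set.univ f)
    (hd : Differentiable ℝ f) (y z : E) :
    f y + ⟪gradient f y, z - y⟫_ℝ ≤ f z := by
  have hline := hasDerivAt_line' y z 0
  have hfd : HasFDerivAt f (fderiv ℝ f y) (y + (0:ℝ) • (z - y)) := by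
    simpa using (hd y).hasFDerivAt
  have hcomp : HasDerivAt (fun t : ℝ => f (y + t • (z - y))) (fderiv ℝ f y (z - y)) 0 :=
    hfd.comp_hasDerivAt 0 hline
  have h := convexOn_le_of_hasDerivAt_zero' (convexOn_comp_line' hf y z) hcomp
  rw [inner_gradient_eq_fderiv']
  simpa using h

lemma strongConvexOn_grad_le' {f : E → ℝ} {μ : ℝ}
    (hf : StrongConvexOn Set.univ μ f) (hd : Differentiable ℝ f) (y z : E) :
    f y + ⟪gradient f y, z - y⟫_ℝ + μ / 2 * ‖z - y‖ ^ 2 ≤ f z := by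
  have hconv : ConvexOn ℝ Set.univ fun x => f x - μ / 2 * ‖x‖ ^ 2 :=
    strongConvexOn_iff_convex.mp hf
  have hline := hasDerivAt_line' y z 0
  have hfd : HasFDerivAt f (fderiv ℝ f y) (y + (0:ℝ) • (z - y)) := by
    simpa using (hd y).hasFDerivAt
  have h1 : HasDerivAt (fun t : ℝ => f (y + t • (z - y))) (fderiv ℝ f y (z - y)) 0 :=
    hfd.comp_hasDerivAt 0 hline
  have h2 : HasDerivAt (fun t : ℝ => ‖y + t • (z - y)‖ ^ 2)
      (2 * ⟪y + (0:ℝ) • (z - y), z - y⟫_ℝ) 0 := hline.norm_sq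
  have h3 : HasDerivAt (fun t : ℝ => f (y + t • (z - y)) - μ / 2 * ‖y + t • (z - y)‖ ^ 2)
      (fderiv ℝ f y (z - y) - μ / 2 * (2 * ⟪y + (0:ℝ) • (z - y), z - y⟫_ℝ)) 0 :=
    h1.sub (h2.const_mul (μ / 2))
  have h4 := convexOn_le_of_hasDerivAt_zero' (convexOn_comp_line' hconv y z) h3
  simp only [zero_smul, add_zero, one_smul] at h4
  have hyz : y + (z - y) = z := by abel
  rw [hyz] at h4
  have hnorm : ‖z - y‖ ^ 2 = ‖z‖ ^ 2 - ‖y‖ ^ 2 - 2 * ⟪y, z - y⟫_ℝ := by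
    rw [inner_sub_right, real_inner_self_eq_norm_sq, norm_sub_sq_real, real_inner_comm]
    ring
  rw [inner_gradient_eq_fderiv', hnorm]
  linarith [h4]

lemma descent_base' {f : E → ℝ} (hd : Differentiable ℝ f) {L : ℝ} (hL0 : 0 ≤ L)
    (hL : ∀ y z : E, ‖gradient f y - gradient f z‖ ≤ L * ‖y - z‖) (y z : E) :
    f z ≤ f y + ⟪gradient f y, z - y⟫_ℝ + L * ‖z - y‖ ^ 2 := by
  set F' : E → (E →L[ℝ] ℝ) := fun w => fderiv ℝ f w - fderiv ℝ f y with hF'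
  have hFd : ∀ w ∈ segment ℝ y z,
      HasFDerivWithinAt (fun w => f w - fderiv ℝ f y w) (F' w) (segment ℝ y z) w :=
    fun w _ => ((hd w).hasFDerivAt.sub ((fderiv ℝ f y).hasFDerivAt)).hasFDerivWithinAt
  have hbound : ∀ w ∈ segment ℝ y z, ‖F' w‖ ≤ L * ‖z - y‖ := by
    intro w hw
    have hop : ‖F' w‖ ≤ ‖gradient f w - gradient f y‖ := by
      refine ContinuousLinearMap.opNorm_le_bound _ (norm_nonneg _) fun u => ?_
      have he : F' w u = ⟪gradient f w - gradient f y, u⟫_ℝ := by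
        simp [hF', inner_sub_left, inner_gradient_eq_fderiv']
      rw [he, Real.norm_eq_abs]
      exact abs_real_inner_le_norm _ _
    have hseg : ‖w - y‖ ≤ ‖z - y‖ := by
      obtain ⟨a, c, ha, hc, hac, rfl⟩ := hw
      have hw2 : a • y + c • z - y = c • (z - y) := by
        obtain rfl : a = 1 - c := by linarith
        module
      rw [hw2, norm_smul, Real.norm_eq_abs, abs_of_nonneg hc]
      nlinarith [norm_nonneg (z - y)]
    calc ‖F' w‖ ≤ ‖gradient f w - gradient f y‖ := hop
      _ ≤ L * ‖w - y‖ := hL w y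
      _ ≤ L * ‖z - y‖ := by nlinarith
  have hmv := (convex_segment y z).norm_image_sub_le_of_norm_hasFDerivWithin_le hFd hbound
    (left_mem_segment ℝ y z) (right_mem_segment ℝ y z)
  rw [Real.norm_eq_abs, abs_le] at hmv
  have hlin : (fderiv ℝ f y) z - (fderiv ℝ f y) y = ⟪gradient f y, z - y⟫_ℝ := by
    rw [inner_gradient_eq_fderiv', map_sub]
  have h2 := hmv.2
  nlinarith [h2, hlin, sq_abs ‖z - y‖]

lemma descent' {f : E → ℝ} (hd : Differentiable ℝ f) {L : ℝ} (hL0 : 0 ≤ L)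
    (hL : ∀ y z : E, ‖gradient f y - gradient f z‖ ≤ L * ‖y - z‖) (y z : E) :
    f z ≤ f y + ⟪gradient f y, z - y⟫_ℝ + 3 / 4 * L * ‖z - y‖ ^ 2 := by
  set m := y + (1/2 : ℝ) • (z - y) with hm
  have hmy : m - y = (1/2 : ℝ) • (z - y) := by rw [hm]; module
  have hzm : z - m = (1/2 : ℝ) • (z - y) := by rw [hm]; module
  have hn : ‖(1/2 : ℝ) • (z - y)‖ = 1/2 * ‖z - y‖ := by
    rw [norm_smul, Real.norm_eq_abs]; norm_num
  have d1 := descent_base' hd hL0 hL y m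
  have d2 := descent_base' hd hL0 hL m z
  have hcross : ⟪gradient f m, z - m⟫_ℝ
      ≤ ⟪gradient f y, z - m⟫_ℝ + L * ‖m - y‖ * ‖z - m‖ := by
    have h1 : ⟪gradient f m - gradient f y, z - m⟫_ℝ
        ≤ ‖gradient f m - gradient f y‖ * ‖z - m‖ := real_inner_le_norm _ _
    have h2 := hL m y
    have h3 : ⟪gradient f m - gradient f y, z - m⟫_ℝ
        = ⟪gradient f m, z - m⟫_ℝ - ⟪gradient f y, z - m⟫_ℝ := inner_sub_left _ _ _
    nlinarith [norm_nonneg (z - m)]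
  have hsum : ⟪gradient f y, m - y⟫_ℝ + ⟪gradient f y, z - m⟫_ℝ
      = ⟪gradient f y, z - y⟫_ℝ := by
    rw [← inner_add_right]
    congr 1
    abel
  simp only [hmy, hzm, hn] at d1 d2 hcross hsum
  nlinarith [d1, d2, hcross, hsum]


set_option maxHeartbeats 1000000 in
/-- One-step contraction toward the fixed lower-level minimizer `y*(x̄)`:
with `g(x̄,·)` `μ`-strongly convex and `L_g`-smooth,
`ŷ = argmin_y {⟨v̄, y⟩ + (b/(2λ))‖y - ȳ‖²}`, i.e. `ŷ = ȳ - (λ/b) v̄`,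
`ȳ⁺ = ȳ + η(ŷ - ȳ)`, `0 < η ≤ 1`, `0 < λ ≤ b/(6L_g)`:
`‖ȳ⁺ - y*(x̄)‖² ≤ (1 - ημλ/(2b))‖ȳ - y*(x̄)‖² - (3η/4)‖ŷ - ȳ‖²
  + (4ηλ/(μb))‖∇_y g(x̄,ȳ) - v̄‖²`. -/
theorem lower_level_one_step (d p : ℕ)
    (g : EuclideanSpace ℝ (Fin d) → EuclideanSpace ℝ (Fin p) → ℝ)
    (μ Lg lam η b : ℝ)
    (hμ : 0 < μ) (hμL : μ ≤ Lg)
    (hb : 0 < b) (hη : 0 < η) (hη1 : η ≤ 1)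
    (hlam : 0 < lam) (hlam2 : lam ≤ b / (6 * Lg))
    (hdiff : ∀ x, Differentiable ℝ (fun y => g x y))
    (hsc : ∀ x, StrongConvexOn Set.univ μ (fun y => g x y))
    (hsmooth : ∀ x y1 y2,
      ‖gradient (fun y => g x y) y1 - gradient (fun y => g x y) y2‖ ≤ Lg * ‖y1 - y2‖)
    (xbar : EuclideanSpace ℝ (Fin d))
    (ystar : EuclideanSpace ℝ (Fin p))
    (hmin : ∀ y, g xbar ystar ≤ g xbar y)
    (ybar yhat ynext v : EuclideanSpace ℝ (Fin p))
    (hyhat : yhat = ybar - (lam / b) • v)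
    (hynext : ynext = ybar + η • (yhat - ybar)) :
    ‖ynext - ystar‖ ^ 2 ≤
      (1 - η * μ * lam / (2 * b)) * ‖ybar - ystar‖ ^ 2 -
      (3 * η / 4) * ‖yhat - ybar‖ ^ 2 +
      (4 * η * lam / (μ * b)) * ‖gradient (fun y => g xbar y) ybar - v‖ ^ 2 := by
  have hLg : 0 < Lg := lt_of_lt_of_le hμ hμL
  set f : EuclideanSpace ℝ (Fin p) → ℝ := fun y => g xbar y with hfdef
  have hd : Differentiable ℝ f := hdiff xbar
  have hLip : ∀ y1 y2, ‖gradient f y1 - gradient f y2‖ ≤ Lg * ‖y1 - y2‖ := hsmooth xbar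
  set Gb : EuclideanSpace ℝ (Fin p) := gradient f ybar with hGbdef
  set a : ℝ := ‖ybar - ystar‖ with hadef
  set s : ℝ := ‖yhat - ybar‖ with hsdef
  set e : ℝ := ‖Gb - v‖ with hedef
  set gn : ℝ := ‖Gb‖ with hgndef
  set u : ℝ := (3 * Lg)⁻¹ with hu_def
  set q : ℝ := μ⁻¹ with hq_def
  set r : ℝ := lam / b with hr_def
  have hu : 3 * Lg * u = 1 := by rw [hu_def]; field_simp
  have hq0 : 0 ≤ q := by rw [hq_def]; positivity
  have hu0 : 0 ≤ u := by rw [hu_def]; positivity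
  have hr : 0 < r := div_pos hlam hb
  have hr6 : 6 * Lg * r ≤ 1 := by
    have h1 : lam * (6 * Lg) ≤ b := (le_div_iff₀ (by positivity)).mp hlam2
    rw [hr_def, show 6 * Lg * (lam / b) = lam * (6 * Lg) / b by ring, div_le_one hb]
    exact h1
  have hru : 2 * r ≤ u := by
    rw [hu_def, inv_eq_one_div, le_div_iff₀ (by positivity : (0:ℝ) < 3 * Lg)]
    linarith
  have hrq : 6 * r ≤ q := by
    rw [hq_def, inv_eq_one_div, le_div_iff₀ hμ]
    nlinarith [mul_nonneg (sub_nonneg.2 hμL) hr.le]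
  -- key1 : u * gn ^ 2 ≤ f ybar - f ystar
  have key1 : u * gn ^ 2 ≤ f ybar - f ystar := by
    have hdz : f (ybar - (2 * u) • Gb) ≤ f ybar + ⟪Gb, ybar - (2 * u) • Gb - ybar⟫_ℝ +
        3 / 4 * Lg * ‖ybar - (2 * u) • Gb - ybar‖ ^ 2 := descent' hd hLg.le hLip ybar _
    have h1 : ybar - (2 * u) • Gb - ybar = -((2 * u) • Gb) := by abel
    rw [h1] at hdz
    have h2 : ⟪Gb, -((2 * u) • Gb)⟫_ℝ = -(2 * u * gn ^ 2) := by
      rw [inner_neg_right, real_inner_smul_right, real_inner_self_eq_norm_sq]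
    have h3 : ‖-((2 * u) • Gb)‖ ^ 2 = 4 * u ^ 2 * gn ^ 2 := by
      rw [norm_neg, norm_smul, Real.norm_eq_abs, abs_of_nonneg (by positivity), mul_pow]
      ring
    rw [h2, h3] at hdz
    have h4 : f ystar ≤ f (ybar - (2 * u) • Gb) := hmin _
    have h5 : 3 / 4 * Lg * (4 * u ^ 2 * gn ^ 2) = u * gn ^ 2 := by
      linear_combination (u * gn ^ 2) * hu
    linarith [h4, hdz, h5.le, h5.ge]
  -- key2 : strong convexity
  have key2 : f ybar + ⟪Gb, ystar - ybar⟫_ℝ + μ / 2 * ‖ystar - ybar‖ ^ 2 ≤ f ystar :=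
    strongConvexOn_grad_le' (hsc xbar) hd ybar ystar
  have key2' : μ / 2 * a ^ 2 + (f ybar - f ystar) ≤ ⟪Gb, ybar - ystar⟫_ℝ := by
    have h1 : ⟪Gb, ystar - ybar⟫_ℝ = -⟪Gb, ybar - ystar⟫_ℝ := by
      rw [← inner_neg_right]
      congr 1
      abel
    have h2 : ‖ystar - ybar‖ = a := norm_sub_rev _ _
    rw [h1, h2] at key2
    linarith
  -- Young
  have young : ⟪Gb - v, ybar - ystar⟫_ℝ ≤ μ / 4 * a ^ 2 + q * e ^ 2 := by
    have h1 := real_inner_le_norm (Gb - v) (ybar - ystar)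
    have h2 : μ * (e * a) ≤ μ * (μ / 4 * a ^ 2 + q * e ^ 2) := by
      have h3 : μ * (q * e ^ 2) = e ^ 2 := by
        rw [hq_def]; field_simp
      nlinarith [sq_nonneg (μ / 2 * a - e)]
    have h4 : e * a ≤ μ / 4 * a ^ 2 + q * e ^ 2 := le_of_mul_le_mul_left h2 hμ
    calc ⟪Gb - v, ybar - ystar⟫_ℝ ≤ e * a := h1
      _ ≤ _ := h4
  -- inner product bound
  have hip : μ / 4 * a ^ 2 + u * gn ^ 2 - q * e ^ 2 ≤ ⟪v, ybar - ystar⟫_ℝ := by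
    have h1 : ⟪v, ybar - ystar⟫_ℝ = ⟪Gb, ybar - ystar⟫_ℝ - ⟪Gb - v, ybar - ystar⟫_ℝ := by
      rw [inner_sub_left]; ring
    rw [h1]
    linarith [key2', young, key1]
  -- step bound
  have hyb : yhat - ybar = -(r • v) := by rw [hyhat]; abel
  have hs : s ≤ r * (gn + e) := by
    have h2 : s = r * ‖v‖ := by
      rw [hsdef, hyb, norm_neg, norm_smul, Real.norm_eq_abs, abs_of_pos hr]
    have h3 : ‖v‖ ≤ gn + e := by
      have hv : v = Gb - (Gb - v) := by abel
      calc ‖v‖ = ‖Gb - (Gb - v)‖ := by rw [← hv]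
        _ ≤ gn + e := norm_sub_le _ _
    rw [h2]
    exact mul_le_mul_of_nonneg_left h3 hr.le
  have hs0 : 0 ≤ s := norm_nonneg _
  have hgn0 : 0 ≤ gn := norm_nonneg _
  have he0 : 0 ≤ e := norm_nonneg _
  -- expansion
  have hexp : ‖ynext - ystar‖ ^ 2 = a ^ 2 - 2 * η * r * ⟪v, ybar - ystar⟫_ℝ + η ^ 2 * s ^ 2 := by
    have h1 : ynext - ystar = (ybar - ystar) + η • (yhat - ybar) := by rw [hynext]; abel
    rw [h1, norm_add_sq_real]
    have h2 : ⟪ybar - ystar, η • (yhat - ybar)⟫_ℝ = η * ⟪ybar - ystar, yhat - ybar⟫_ℝ :=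
      real_inner_smul_right _ _ _
    have h4 : ⟪ybar - ystar, yhat - ybar⟫_ℝ = -(r * ⟪v, ybar - ystar⟫_ℝ) := by
      rw [hyb, inner_neg_right, real_inner_smul_right, real_inner_comm]
    have h5 : ‖η • (yhat - ybar)‖ ^ 2 = η ^ 2 * s ^ 2 := by
      rw [norm_smul, Real.norm_eq_abs, abs_of_pos hη, mul_pow, hsdef]
    rw [h2, h4, h5, hadef]
    ring
  -- coefficient rewrites
  have hc1 : η * μ * lam / (2 * b) = η * μ * r / 2 := by
    rw [hr_def]; ring
  have hc2 : 4 * η * lam / (μ * b) = 4 * η * r * q := by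
    rw [hr_def, hq_def]; ring
  rw [hexp, hc1, hc2]
  -- final arithmetic
  have step1 : 2 * η * r * (μ / 4 * a ^ 2 + u * gn ^ 2 - q * e ^ 2)
      ≤ 2 * η * r * ⟪v, ybar - ystar⟫_ℝ :=
    mul_le_mul_of_nonneg_left hip (by positivity)
  have step2 : s ^ 2 ≤ 2 * r ^ 2 * (gn ^ 2 + e ^ 2) := by
    nlinarith [mul_self_le_mul_self hs0 hs, sq_nonneg (gn - e), sq_nonneg r]
  have step3 : (7 / 4) * s ^ 2 ≤ 2 * r * u * gn ^ 2 + 2 * r * q * e ^ 2 := by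
    nlinarith [step2,
      mul_nonneg (mul_nonneg hr.le (by linarith : (0:ℝ) ≤ u - 2 * r)) (sq_nonneg gn),
      mul_nonneg (mul_nonneg hr.le (by linarith : (0:ℝ) ≤ q - 6 * r)) (sq_nonneg e),
      mul_nonneg (mul_nonneg hr.le hr.le) (sq_nonneg gn),
      mul_nonneg (mul_nonneg hr.le hr.le) (sq_nonneg e)]
  linarith [step1, mul_le_mul_of_nonneg_left step3 hη.le,
    mul_nonneg (mul_nonneg hη.le (by linarith : (0:ℝ) ≤ 1 - η)) (sq_nonneg s),
    mul_nonneg (mul_nonneg (mul_nonneg hη.le hr.le) hq0) (sq_nonneg e)]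
end

section
/- Let v^m_{t+1} = ∇_y g^m(x^m_{t+1}, y^m_{t+1}; ζ^m_{t+1}) + (1 - α_{t+1})[v^m_t - ∇_y g^m(x^m_t, y^m_t; ζ^m_{t+1})] be the STORM momentum-based variance-reduced estimator on each of M clients with independent samples across clients, where each stochastic gradient is unbiased with variance at most σ², each ∇_y g^m(·,·;ζ) is L_g-Lipschitz, 0 < α_{t+1} ≤ 1, and the updates satisfy x^m_{t+1} - x^m_t = η_t(x̂^m_{t+1} - x^m_t), y^m_{t+1} - y^m_t = η_t(ŷ^m_{t+1} - y^m_t). Then E||v̄_{t+1} - (1/M)∑_m ∇_y g^m(x^m_{t+1}, y^m_{t+1})||² ≤ (1 - α_{t+1}) E||v̄_t - (1/M)∑_m ∇_y g^m(x^m_t, y^m_t)||² + 2α_{t+1}²σ²/M + (4L_g²η_t²/M²)∑_{m=1}^M E(||x̂^m_{t+1} - x^m_t||² + ||ŷ^m_{t+1} - y^m_t||²), where v̄_t = (1/M)∑_m v^m_t. -/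
/-!
Write `a_m`, `b_m` for the stochastic gradients of client `m` at the new and the old point (same
sample). The error `v̄⁺ - ḡ⁺` of the averaged estimator is `(1 - α) (v̄ - ḡ)` plus the average of
the per-client noises `N_m = (a_m - 𝔼a_m) - (1 - α)(b_m - 𝔼b_m)`. These are centred and
independent across clients, hence orthogonal in `L²` to each other and to constants, so the
mean square error is `(1 - α)² ‖v̄ - ḡ‖² + M⁻² ∑ 𝔼‖N_m‖²`. Writing
`N_m = α (a_m - 𝔼a_m) + (1 - α)((a_m - b_m) - 𝔼(a_m - b_m))` and using that `a_m - b_m` is bounded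
by the Lipschitz constant times the step gives `𝔼‖N_m‖² ≤ 2α²σ² + 2L_g²η²(‖x̂ - x‖² + ‖ŷ - y‖²)`.
-/

open MeasureTheory ProbabilityTheory
open scoped ENNReal RealInnerProductSpace

section

variable {Ω E : Type*}

theorem norm_add_sq_le [SeminormedAddCommGroup E] (u v : E) :
    ‖u + v‖ ^ 2 ≤ 2 * ‖u‖ ^ 2 + 2 * ‖v‖ ^ 2 := by
  nlinarith [norm_add_le u v, norm_nonneg (u + v), sq_nonneg (‖u‖ - ‖v‖)]

section StormNoise

variable [NormedAddCommGroup E] [NormedSpace ℝ E]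

/-- The random part of the error of one STORM step on one client: `a`, `b` are the stochastic
gradients at the new and the old point (same sample), `ga`, `gb` the true gradients there, and
`v⁺ - ga = (1 - α) • (v - gb) + stormNoise α a b ga gb`. -/
def stormNoise (α : ℝ) (a b : Ω → E) (ga gb : E) (ω : Ω) : E :=
  (a ω - ga) - (1 - α) • (b ω - gb)

theorem smul_sum_sub_smul_sum_eq_stormNoise {ι : Type*} [Fintype ι] (α r : ℝ)
    {a b v' : ι → Ω → E} {v : ι → E}
    (hv : ∀ i ω, v' i ω = a i ω + (1 - α) • (v i - b i ω)) (ga gb : ι → E) (ω : Ω) :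
    r • ∑ i, v' i ω - r • ∑ i, ga i =
      (1 - α) • (r • ∑ i, v i - r • ∑ i, gb i) +
        r • ∑ i, stormNoise α (a i) (b i) (ga i) (gb i) ω := by
  have hclient : ∀ i, v' i ω - ga i =
      (1 - α) • (v i - gb i) + stormNoise α (a i) (b i) (ga i) (gb i) ω := fun i ↦ by
    rw [hv, stormNoise]
    module
  simp only [← smul_sub, ← Finset.sum_sub_distrib, hclient, Finset.sum_add_distrib,
    ← Finset.smul_sum, smul_add, smul_comm (1 - α)]

end StormNoise

variable [MeasurableSpace Ω] {P : Measure Ω} [IsProbabilityMeasure P]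

section Lp

variable [NormedAddCommGroup E] {μ : Measure Ω} [IsFiniteMeasure μ] {p : ℝ≥0∞}

theorem MeasureTheory.MemLp.of_norm_sub_le {a b : Ω → E} {L : ℝ} (ha : MemLp a p μ)
    (hb : AEStronglyMeasurable b μ) (hab : ∀ ω, ‖a ω - b ω‖ ≤ L) : MemLp b p μ := by
  have hd : MemLp (a - b) p μ := .of_bound (ha.aestronglyMeasurable.sub hb) L (.of_forall hab)
  simpa using ha.sub hd

variable [NormedSpace ℝ E]

theorem MeasureTheory.MemLp.of_const_add_smul {f : Ω → E} {c : E} {r : ℝ} (hr : r ≠ 0)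
    (h : MemLp (fun ω ↦ c + r • f ω) p μ) : MemLp f p μ := by
  have hf : f = r⁻¹ • ((fun ω ↦ c + r • f ω) - fun _ ↦ c) := by
    ext ω
    simp [smul_smul, inv_mul_cancel₀ hr]
  rw [hf]
  exact (h.sub (memLp_const c)).const_smul r⁻¹

variable {α L : ℝ} {a b : Ω → E}

theorem memLp_stormNoise (ha : MemLp a p μ) (hb : MemLp b p μ) (ga gb : E) :
    MemLp (stormNoise α a b ga gb) p μ :=
  (ha.sub (memLp_const ga)).sub ((hb.sub (memLp_const gb)).const_smul (1 - α))

theorem MeasureTheory.MemLp.of_memLp_stormNoise {ga gb : E} (hα : α ≠ 0)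
    (ha : AEStronglyMeasurable a μ) (hb : AEStronglyMeasurable b μ)
    (hab : ∀ ω, ‖a ω - b ω‖ ≤ L) (h : MemLp (stormNoise α a b ga gb) p μ) : MemLp a p μ := by
  have hba : MemLp (b - a) p μ :=
    .of_bound (hb.sub ha) L (.of_forall fun ω ↦ by simpa [norm_sub_rev] using hab ω)
  have hαa : MemLp (α • a) p μ := by
    convert (h.add (hba.const_smul (1 - α))).add (memLp_const (ga - (1 - α) • gb)) using 1
    ext ω
    simp only [stormNoise, Pi.add_apply, Pi.smul_apply, Pi.sub_apply]
    module
  simpa [smul_smul, inv_mul_cancel₀ hα] using hαa.const_smul α⁻¹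

end Lp

section SecondMoment

variable [NormedAddCommGroup E] [InnerProductSpace ℝ E] [CompleteSpace E]

theorem integral_norm_add_sq_of_integral_eq_zero (c : E) {Y : Ω → E} (hY : MemLp Y 2 P)
    (hY0 : ∫ ω, Y ω ∂P = 0) :
    ∫ ω, ‖c + Y ω‖ ^ 2 ∂P = ‖c‖ ^ 2 + ∫ ω, ‖Y ω‖ ^ 2 ∂P := by
  have hinner : Integrable (fun ω ↦ ⟪c, Y ω⟫) P :=
    (innerSL ℝ c).integrable_comp (hY.integrable one_le_two)
  have hsq : Integrable (fun ω ↦ ‖Y ω‖ ^ 2) P := hY.integrable_norm_pow two_ne_zero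
  have hlin : Integrable (fun ω ↦ ‖c‖ ^ 2 + 2 * ⟪c, Y ω⟫) P :=
    (integrable_const _).add (hinner.const_mul 2)
  simp_rw [norm_add_sq_real]
  rw [integral_add hlin hsq, integral_add (integrable_const _) (hinner.const_mul 2),
    integral_const_mul, integral_inner (hY.integrable one_le_two), hY0]
  simp

theorem integral_norm_sub_integral_sq_le {f : Ω → E} (hf : MemLp f 2 P) :
    ∫ ω, ‖f ω - ∫ ω', f ω' ∂P‖ ^ 2 ∂P ≤ ∫ ω, ‖f ω‖ ^ 2 ∂P := by
  have hc : MemLp (fun ω ↦ f ω - ∫ ω', f ω' ∂P) 2 P := hf.sub (memLp_const _)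
  have hc0 : ∫ ω, (f ω - ∫ ω', f ω' ∂P) ∂P = 0 := by
    simp [integral_sub (hf.integrable one_le_two) (integrable_const _)]
  have key := integral_norm_add_sq_of_integral_eq_zero (∫ ω', f ω' ∂P) hc hc0
  simp only [add_sub_cancel] at key
  rw [key]
  exact le_add_of_nonneg_left (sq_nonneg _)

variable {α L : ℝ} {a b : Ω → E}

theorem integral_stormNoise (ha : Integrable a P) (hb : Integrable b P) :
    ∫ ω, stormNoise α a b (∫ ω, a ω ∂P) (∫ ω, b ω ∂P) ω ∂P = 0 := by
  simp only [stormNoise]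
  rw [integral_sub (by fun_prop) (by fun_prop), integral_sub ha (integrable_const _),
    integral_smul, integral_sub hb (integrable_const _)]
  simp

theorem integral_norm_stormNoise_sq_le (hα0 : 0 ≤ α) (hα1 : α ≤ 1) (ha : MemLp a 2 P)
    (hb : AEStronglyMeasurable b P) (hab : ∀ ω, ‖a ω - b ω‖ ≤ L) :
    ∫ ω, ‖stormNoise α a b (∫ ω, a ω ∂P) (∫ ω, b ω ∂P) ω‖ ^ 2 ∂P ≤
      2 * α ^ 2 * ∫ ω, ‖a ω - ∫ ω', a ω' ∂P‖ ^ 2 ∂P + 2 * L ^ 2 := by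
  have hb2 : MemLp b 2 P := ha.of_norm_sub_le hb hab
  set u : Ω → E := fun ω ↦ a ω - ∫ ω', a ω' ∂P
  set c : Ω → E := fun ω ↦ a ω - b ω
  set v : Ω → E := fun ω ↦ c ω - ∫ ω', c ω' ∂P
  have hu : Integrable (fun ω ↦ ‖u ω‖ ^ 2) P :=
    (ha.sub (memLp_const _)).integrable_norm_pow two_ne_zero
  have hc : MemLp c 2 P := ha.sub hb2
  have hv : Integrable (fun ω ↦ ‖v ω‖ ^ 2) P :=
    (hc.sub (memLp_const _)).integrable_norm_pow two_ne_zero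
  -- Only `a` carries the variance; `b` enters through the difference `c = a - b`, bounded by `L`.
  have hsplit : ∀ ω, stormNoise α a b (∫ ω, a ω ∂P) (∫ ω, b ω ∂P) ω =
      α • u ω + (1 - α) • v ω := fun ω ↦ by
    simp only [stormNoise, u, v, c,
      integral_sub (ha.integrable one_le_two) (hb2.integrable one_le_two)]
    module
  have hpt : ∀ ω, ‖stormNoise α a b (∫ ω, a ω ∂P) (∫ ω, b ω ∂P) ω‖ ^ 2 ≤
      2 * α ^ 2 * ‖u ω‖ ^ 2 + 2 * ‖v ω‖ ^ 2 := fun ω ↦ by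
    have h1α : (1 - α) ^ 2 ≤ 1 := by nlinarith
    rw [hsplit]
    refine (norm_add_sq_le _ _).trans ?_
    rw [norm_smul, norm_smul, mul_pow, mul_pow, Real.norm_eq_abs, Real.norm_eq_abs, sq_abs,
      sq_abs]
    nlinarith [sq_nonneg ‖v ω‖]
  have hvL : ∫ ω, ‖v ω‖ ^ 2 ∂P ≤ L ^ 2 :=
    calc ∫ ω, ‖v ω‖ ^ 2 ∂P ≤ ∫ ω, ‖c ω‖ ^ 2 ∂P := integral_norm_sub_integral_sq_le hc
      _ ≤ ∫ _ : Ω, L ^ 2 ∂P :=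
        integral_mono_of_nonneg (.of_forall fun _ ↦ by positivity) (integrable_const _)
          (.of_forall fun ω ↦ pow_le_pow_left₀ (norm_nonneg _) (hab ω) 2)
      _ = L ^ 2 := by simp
  calc _ ≤ ∫ ω, (2 * α ^ 2 * ‖u ω‖ ^ 2 + 2 * ‖v ω‖ ^ 2) ∂P :=
        integral_mono_of_nonneg (.of_forall fun _ ↦ by positivity)
          ((hu.const_mul _).add (hv.const_mul _)) (.of_forall hpt)
    _ = 2 * α ^ 2 * ∫ ω, ‖u ω‖ ^ 2 ∂P + 2 * ∫ ω, ‖v ω‖ ^ 2 ∂P := by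
        rw [integral_add (hu.const_mul _) (hv.const_mul _), integral_const_mul,
          integral_const_mul]
    _ ≤ _ := by gcongr

end SecondMoment

section Independence

variable [NormedAddCommGroup E] [MeasurableSpace E] [BorelSpace E] [SecondCountableTopology E]

theorem ProbabilityTheory.IndepFun.memLp_left_of_memLp_add {p : ℝ≥0∞} (hp : p ≠ ∞)
    {X Y : Ω → E} (hX : Measurable X) (hY : Measurable Y) (hXY : IndepFun X Y P)
    (h : MemLp (fun ω ↦ X ω + Y ω) p P) : MemLp X p P := by
  rcases eq_or_ne p 0 with rfl | hp0
  · exact memLp_zero_iff_aestronglyMeasurable.2 hX.aestronglyMeasurable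
  have : IsProbabilityMeasure (P.map Y) := Measure.isProbabilityMeasure_map hY.aemeasurable
  have hF : Measurable fun q : E × E ↦ ‖q.1 + q.2‖ ^ p.toReal := by fun_prop
  -- Fubini on the product law: `x ↦ ‖x + y‖ ^ p` is integrable against the law of `X` for some `y`.
  have hprod : Integrable (fun q : E × E ↦ ‖q.1 + q.2‖ ^ p.toReal) ((P.map X).prod (P.map Y)) := by
    rw [← hXY.map_prod_eq_prod_map_map hX.aemeasurable hY.aemeasurable,
      integrable_map_measure hF.aestronglyMeasurable (hX.prodMk hY).aemeasurable]
    exact (integrable_norm_rpow_iff (hX.add hY).aestronglyMeasurable hp0 hp).2 h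
  obtain ⟨y, hy⟩ := hprod.prod_left_ae.exists
  have hshift : MemLp (fun x : E ↦ x + y) p (P.map X) :=
    (integrable_norm_rpow_iff (by fun_prop) hp0 hp).1 hy
  have hid : MemLp id p (P.map X) := by
    convert hshift.sub (memLp_const y) using 1
    ext x
    simp
  exact (memLp_map_measure_iff aestronglyMeasurable_id hX.aemeasurable).1 hid

theorem ProbabilityTheory.iIndepFun.memLp_of_memLp_sum {ι : Type*} [Fintype ι] {p : ℝ≥0∞}
    (hp : p ≠ ∞) {X : ι → Ω → E} (hX : iIndepFun X P) (hXm : ∀ i, Measurable (X i))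
    (h : MemLp (fun ω ↦ ∑ i, X i ω) p P) (i : ι) : MemLp (X i) p P := by
  classical
  have hrest : IndepFun (X i) (∑ j ∈ Finset.univ.erase i, X j) P :=
    (hX.indepFun_finsetSum_of_notMem hXm (Finset.notMem_erase i Finset.univ)).symm
  rw [Finset.sum_fn] at hrest
  refine hrest.memLp_left_of_memLp_add hp (hXm i) (Finset.measurable_sum _ fun j _ ↦ hXm j) ?_
  simpa [Finset.sum_apply, Finset.add_sum_erase _ _ (Finset.mem_univ i)] using h

end Independence

section IndependentSum

variable [NormedAddCommGroup E] [InnerProductSpace ℝ E] [CompleteSpace E] [MeasurableSpace E]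
  [BorelSpace E]

theorem ProbabilityTheory.iIndepFun.integral_norm_sum_sq {ι : Type*} [Fintype ι]
    {X : ι → Ω → E} (hX : iIndepFun X P) (h2 : ∀ i, MemLp (X i) 2 P)
    (h0 : ∀ i, ∫ ω, X i ω ∂P = 0) :
    ∫ ω, ‖∑ i, X i ω‖ ^ 2 ∂P = ∑ i, ∫ ω, ‖X i ω‖ ^ 2 ∂P := by
  classical
  have hint : ∀ i j, Integrable (fun ω ↦ ⟪X i ω, X j ω⟫) P := by
    intro i j
    rcases eq_or_ne i j with rfl | hij
    · simpa only [real_inner_self_eq_norm_sq] using (h2 i).integrable_norm_pow two_ne_zero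
    · exact (hX.indepFun hij).integrable_bilin ((h2 i).integrable one_le_two)
        ((h2 j).integrable one_le_two) (innerSL ℝ)
  have hcross : ∀ i j, i ≠ j → ∫ ω, ⟪X i ω, X j ω⟫ ∂P = 0 := fun i j hij ↦
    ((hX.indepFun hij).integral_bilin ((h2 i).integrable one_le_two)
      ((h2 j).integrable one_le_two) (innerSL ℝ)).trans (by simp [h0])
  simp_rw [← real_inner_self_eq_norm_sq, sum_inner, inner_sum]
  rw [integral_finsetSum _ fun i _ ↦ integrable_finsetSum _ fun j _ ↦ hint i j]
  refine Finset.sum_congr rfl fun i _ ↦ ?_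
  rw [integral_finsetSum _ fun j _ ↦ hint i j,
    Finset.sum_eq_single i (fun j _ hji ↦ hcross i j hji.symm) (by simp)]

theorem ProbabilityTheory.iIndepFun.integral_norm_add_smul_sum_sq {ι : Type*} [Fintype ι]
    (c : E) (r : ℝ) {X : ι → Ω → E} (hX : iIndepFun X P) (h2 : ∀ i, MemLp (X i) 2 P)
    (h0 : ∀ i, ∫ ω, X i ω ∂P = 0) :
    ∫ ω, ‖c + r • ∑ i, X i ω‖ ^ 2 ∂P = ‖c‖ ^ 2 + r ^ 2 * ∑ i, ∫ ω, ‖X i ω‖ ^ 2 ∂P := by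
  have hsum2 : MemLp (fun ω ↦ r • ∑ i, X i ω) 2 P :=
    (memLp_finsetSum _ fun i _ ↦ h2 i).const_smul r
  have hsum0 : ∫ ω, r • ∑ i, X i ω ∂P = 0 := by
    rw [integral_smul, integral_finsetSum _ fun i _ ↦ (h2 i).integrable one_le_two]
    simp [h0]
  rw [integral_norm_add_sq_of_integral_eq_zero c hsum2 hsum0]
  simp_rw [norm_smul, mul_pow, Real.norm_eq_abs, sq_abs]
  rw [integral_const_mul, hX.integral_norm_sum_sq h2 h0]

end IndependentSum

section StormError

variable [NormedAddCommGroup E] [InnerProductSpace ℝ E] [CompleteSpace E] {α : ℝ}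
  [MeasurableSpace E] [BorelSpace E] [SecondCountableTopology E]

theorem ProbabilityTheory.iIndepFun.integral_norm_add_smul_sum_stormNoise_sq_le {ι : Type*}
    [Fintype ι] {a b : ι → Ω → E} {L : ι → ℝ} (hα : 0 < α) (hα1 : α ≤ 1) {r : ℝ} (hr : r ≠ 0)
    (c : E) (ha : ∀ i, Measurable (a i)) (hb : ∀ i, Measurable (b i))
    (hind : iIndepFun (fun i ω ↦ (a i ω, b i ω)) P) (hab : ∀ i ω, ‖a i ω - b i ω‖ ≤ L i) :
    ∫ ω, ‖(1 - α) • c +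
        r • ∑ i, stormNoise α (a i) (b i) (∫ ω, a i ω ∂P) (∫ ω, b i ω ∂P) ω‖ ^ 2 ∂P ≤
      (1 - α) * ‖c‖ ^ 2 +
        r ^ 2 * ∑ i, (2 * α ^ 2 * ∫ ω, ‖a i ω - ∫ ω', a i ω' ∂P‖ ^ 2 ∂P + 2 * L i ^ 2) := by
  set N := fun i ↦ stormNoise α (a i) (b i) (∫ ω, a i ω ∂P) (∫ ω, b i ω ∂P)
  have hN : ∀ i, Measurable (N i) := fun i ↦
    ((ha i).sub_const _).sub (((hb i).sub_const _).fun_const_smul _)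
  have hNind : iIndepFun N P := hind.comp _ fun i ↦
    (measurable_fst.sub_const _).sub ((measurable_snd.sub_const _).fun_const_smul _)
  have hc : ‖(1 - α) • c‖ ^ 2 ≤ (1 - α) * ‖c‖ ^ 2 := by
    rw [norm_smul, mul_pow, Real.norm_eq_abs, sq_abs]
    gcongr
    nlinarith
  by_cases hint : Integrable (fun ω ↦ ‖(1 - α) • c + r • ∑ i, N i ω‖ ^ 2) P
  swap
  · rw [integral_undef hint]
    have hα' : 0 ≤ 1 - α := by linarith
    positivity
  -- The moment assumptions on `a` are junk unless `a` is square integrable, which is forced by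
  -- the independence of the clients.
  have ha2 : ∀ i, MemLp (a i) 2 P := by
    have hsum : MemLp (fun ω ↦ ∑ i, N i ω) 2 P :=
      ((memLp_two_iff_integrable_sq_norm (by fun_prop)).2 hint).of_const_add_smul hr
    exact fun i ↦ (hNind.memLp_of_memLp_sum (by simp) hN hsum i).of_memLp_stormNoise hα.ne'
      (ha i).aestronglyMeasurable (hb i).aestronglyMeasurable (hab i)
  have hb2 : ∀ i, MemLp (b i) 2 P := fun i ↦
    (ha2 i).of_norm_sub_le (hb i).aestronglyMeasurable (hab i)
  rw [hNind.integral_norm_add_smul_sum_sq _ _ (fun i ↦ memLp_stormNoise (ha2 i) (hb2 i) _ _)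
    fun i ↦ integral_stormNoise ((ha2 i).integrable one_le_two) ((hb2 i).integrable one_le_two)]
  gcongr with i
  exact integral_norm_stormNoise_sq_le hα.le hα1 (ha2 i) (hb i).aestronglyMeasurable (hab i)

end StormError

end

theorem storm_variance_step_general
    {Ω : Type*} [MeasurableSpace Ω] (P : Measure Ω) [IsProbabilityMeasure P]
    {Z : Type*} [MeasurableSpace Z]
    (d p M : ℕ) (hM : 0 < M)
    (σ Lg α η : ℝ) (hα : 0 < α) (hα1 : α ≤ 1)
    (G : Fin M → EuclideanSpace ℝ (Fin d) → EuclideanSpace ℝ (Fin p) → Z →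
      EuclideanSpace ℝ (Fin p))
    (gbar : Fin M → EuclideanSpace ℝ (Fin d) → EuclideanSpace ℝ (Fin p) →
      EuclideanSpace ℝ (Fin p))
    (ζ : Fin M → Ω → Z)
    (hζmeas : ∀ m, Measurable (ζ m))
    (hGmeas : ∀ m x y, Measurable (G m x y))
    (hindep : iIndepFun ζ P)
    (hunbiased : ∀ m x y, ∫ ω, G m x y (ζ m ω) ∂P = gbar m x y)
    (hvar : ∀ m x y, ∫ ω, ‖G m x y (ζ m ω) - gbar m x y‖ ^ 2 ∂P ≤ σ ^ 2)
    (hlip : ∀ m z x x' y y', ‖G m x y z - G m x' y' z‖ ≤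
      Lg * Real.sqrt (‖x - x'‖ ^ 2 + ‖y - y'‖ ^ 2))
    (x0 x1 xhat : Fin M → EuclideanSpace ℝ (Fin d))
    (y0 y1 yhat : Fin M → EuclideanSpace ℝ (Fin p))
    (v0 : Fin M → EuclideanSpace ℝ (Fin p))
    (hx : ∀ m, x1 m - x0 m = η • (xhat m - x0 m))
    (hy : ∀ m, y1 m - y0 m = η • (yhat m - y0 m))
    (vnext : Fin M → Ω → EuclideanSpace ℝ (Fin p))
    (hv : ∀ m ω, vnext m ω = G m (x1 m) (y1 m) (ζ m ω) +
      (1 - α) • (v0 m - G m (x0 m) (y0 m) (ζ m ω))) :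
    ∫ ω, ‖(M : ℝ)⁻¹ • ∑ m, vnext m ω - (M : ℝ)⁻¹ • ∑ m, gbar m (x1 m) (y1 m)‖ ^ 2 ∂P ≤
      (1 - α) * ‖(M : ℝ)⁻¹ • ∑ m, v0 m - (M : ℝ)⁻¹ • ∑ m, gbar m (x0 m) (y0 m)‖ ^ 2 +
      2 * α ^ 2 * σ ^ 2 / M +
      (4 * Lg ^ 2 * η ^ 2 / (M : ℝ) ^ 2) *
        ∑ m, (‖xhat m - x0 m‖ ^ 2 + ‖yhat m - y0 m‖ ^ 2) := by
  -- Split off the carried-over error, and write the true gradients as means (`hunbiased`).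
  simp_rw [smul_sum_sub_smul_sum_eq_stormNoise α _ hv (fun m ↦ gbar m (x1 m) (y1 m))
    (fun m ↦ gbar m (x0 m) (y0 m)), ← hunbiased]
  simp_rw [← hunbiased] at hvar
  set C := (M : ℝ)⁻¹ • ∑ m, v0 m - (M : ℝ)⁻¹ • ∑ m, ∫ ω, G m (x0 m) (y0 m) (ζ m ω) ∂P
  set D := fun m ↦ ‖xhat m - x0 m‖ ^ 2 + ‖yhat m - y0 m‖ ^ 2
  have hstep : ∀ m, (Lg * √(‖x1 m - x0 m‖ ^ 2 + ‖y1 m - y0 m‖ ^ 2)) ^ 2 =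
      Lg ^ 2 * η ^ 2 * D m := fun m ↦ by
    rw [mul_pow, Real.sq_sqrt (by positivity), hx, hy, norm_smul, norm_smul, mul_pow, mul_pow,
      Real.norm_eq_abs, sq_abs]
    ring
  have hM0 : (M : ℝ) ≠ 0 := by positivity
  calc _ ≤ _ := iIndepFun.integral_norm_add_smul_sum_stormNoise_sq_le hα hα1 (inv_ne_zero hM0) C
        (fun m ↦ (hGmeas m _ _).comp (hζmeas m)) (fun m ↦ (hGmeas m _ _).comp (hζmeas m))
        (hindep.comp _ fun m ↦ (hGmeas m _ _).prodMk (hGmeas m _ _))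
        fun m ω ↦ hlip m (ζ m ω) (x1 m) (x0 m) (y1 m) (y0 m)
    _ ≤ (1 - α) * ‖C‖ ^ 2 +
          ((M : ℝ)⁻¹) ^ 2 * ∑ m, (2 * α ^ 2 * σ ^ 2 + 2 * (Lg ^ 2 * η ^ 2 * D m)) := by
        gcongr with m
        · exact hvar m _ _
        · exact (hstep m).le
    _ = (1 - α) * ‖C‖ ^ 2 + 2 * α ^ 2 * σ ^ 2 / M + 2 * Lg ^ 2 * η ^ 2 / M ^ 2 * ∑ m, D m := by
        simp only [Finset.sum_add_distrib, Finset.sum_const, Finset.card_univ, Fintype.card_fin,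
          nsmul_eq_mul, ← Finset.mul_sum]
        field_simp
        ring
    _ ≤ _ := by
        gcongr
        norm_num

/-- One-step variance bound for the STORM momentum-based variance-reduced
estimator `v^m⁺ = ∇_y g^m(x^m⁺, y^m⁺; ζ^m) + (1-α)[v^m - ∇_y g^m(x^m, y^m; ζ^m)]`
on `M` clients with independent fresh samples: writing `v̄ = (1/M)∑_m v^m`,
`E‖v̄⁺ - (1/M)∑_m ∇_y g^m(x^m⁺, y^m⁺)‖² ≤
  (1-α)‖v̄ - (1/M)∑_m ∇_y g^m(x^m, y^m)‖² + 2α²σ²/M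
  + (4L_g²η²/M²) ∑_m (‖x̂^m - x^m‖² + ‖ŷ^m - y^m‖²)`. -/
theorem storm_variance_step
    {Ω : Type*} [MeasurableSpace Ω] (P : Measure Ω) [IsProbabilityMeasure P]
    {Z : Type*} [MeasurableSpace Z]
    (d p M : ℕ) (hM : 0 < M)
    (σ Lg α η : ℝ) (hσ : 0 ≤ σ) (hα : 0 < α) (hα1 : α ≤ 1) (hLg : 0 ≤ Lg)
    (G : Fin M → EuclideanSpace ℝ (Fin d) → EuclideanSpace ℝ (Fin p) → Z →
      EuclideanSpace ℝ (Fin p))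
    (gbar : Fin M → EuclideanSpace ℝ (Fin d) → EuclideanSpace ℝ (Fin p) →
      EuclideanSpace ℝ (Fin p))
    (ζ : Fin M → Ω → Z)
    (hζmeas : ∀ m, Measurable (ζ m))
    (hGmeas : ∀ m x y, Measurable (G m x y))
    (hindep : iIndepFun ζ P)
    (hunbiased : ∀ m x y, ∫ ω, G m x y (ζ m ω) ∂P = gbar m x y)
    (hvar : ∀ m x y, ∫ ω, ‖G m x y (ζ m ω) - gbar m x y‖ ^ 2 ∂P ≤ σ ^ 2)
    (hlip : ∀ m z x x' y y', ‖G m x y z - G m x' y' z‖ ≤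
      Lg * Real.sqrt (‖x - x'‖ ^ 2 + ‖y - y'‖ ^ 2))
    (x0 x1 xhat : Fin M → EuclideanSpace ℝ (Fin d))
    (y0 y1 yhat : Fin M → EuclideanSpace ℝ (Fin p))
    (v0 : Fin M → EuclideanSpace ℝ (Fin p))
    (hx : ∀ m, x1 m - x0 m = η • (xhat m - x0 m))
    (hy : ∀ m, y1 m - y0 m = η • (yhat m - y0 m))
    (vnext : Fin M → Ω → EuclideanSpace ℝ (Fin p))
    (hv : ∀ m ω, vnext m ω = G m (x1 m) (y1 m) (ζ m ω) +
      (1 - α) • (v0 m - G m (x0 m) (y0 m) (ζ m ω))) :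
    ∫ ω, ‖(M : ℝ)⁻¹ • ∑ m, vnext m ω - (M : ℝ)⁻¹ • ∑ m, gbar m (x1 m) (y1 m)‖ ^ 2 ∂P ≤
      (1 - α) * ‖(M : ℝ)⁻¹ • ∑ m, v0 m - (M : ℝ)⁻¹ • ∑ m, gbar m (x0 m) (y0 m)‖ ^ 2 +
      2 * α ^ 2 * σ ^ 2 / M +
      (4 * Lg ^ 2 * η ^ 2 / (M : ℝ) ^ 2) *
        ∑ m, (‖xhat m - x0 m‖ ^ 2 + ‖yhat m - y0 m‖ ^ 2) :=
  storm_variance_step_general P d p M hM σ Lg α η hα hα1 G gbar ζ hζmeas hGmeas hindep hunbiased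
    hvar hlip x0 x1 xhat y0 y1 yhat v0 hx hy vnext hv
end

section
/- For the step size sequence η_t = k M^{1/3}/(n+t)^{1/3} with k > 0, n ≥ 2, the reciprocal differences satisfy 1/η_t - 1/η_{t-1} ≤ (2/(3k³)) η_t for all t ≥ 1, provided 0 < η_t ≤ 1. -/
set_option maxHeartbeats 1000000

lemma cube_rpow_third (a : ℝ) (ha : 0 ≤ a) : (a ^ ((1:ℝ)/3)) ^ 3 = a := by
  rw [← Real.rpow_natCast (a ^ ((1:ℝ)/3)) 3, ← Real.rpow_mul ha]
  norm_num

theorem stepsize_reciprocal_diff_bound (k : ℝ) (hk : 0 < k) (M n t : ℕ)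
    (hM : 1 ≤ M) (hn : 2 ≤ n) (ht : 1 ≤ t)
    (η : ℕ → ℝ)
    (hη : ∀ s : ℕ, η s = k * (M : ℝ) ^ ((1 : ℝ) / 3) / ((n : ℝ) + s) ^ ((1 : ℝ) / 3))
    (hle : η t ≤ 1) :
    1 / η t - 1 / η (t - 1) ≤ 2 / (3 * k ^ 3) * η t := by
  set x : ℝ := (n : ℝ) + t with hxdef
  have htc : ((t - 1 : ℕ) : ℝ) = (t : ℝ) - 1 := by
    push_cast [ht]
    ring
  have hn2 : (2:ℝ) ≤ (n:ℝ) := by exact_mod_cast hn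
  have ht1 : (1:ℝ) ≤ (t:ℝ) := by exact_mod_cast ht
  have hM1 : (1:ℝ) ≤ (M:ℝ) := by exact_mod_cast hM
  have hx3 : (3:ℝ) ≤ x := by simp only [hxdef]; linarith
  have hxpos : 0 < x := by linarith
  set y : ℝ := x - 1 with hydef
  have hy2 : (2:ℝ) ≤ y := by simp only [hydef]; linarith
  have hypos : 0 < y := by linarith
  set m : ℝ := (M:ℝ) ^ ((1:ℝ)/3) with hmdef
  set u : ℝ := y ^ ((1:ℝ)/3) with hudef
  set v : ℝ := x ^ ((1:ℝ)/3) with hvdef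
  have hm : 0 < m := Real.rpow_pos_of_pos (by linarith) _
  have hu : 0 < u := Real.rpow_pos_of_pos hypos _
  have hv : 0 < v := Real.rpow_pos_of_pos hxpos _
  have hm3 : m ^ 3 = (M:ℝ) := cube_rpow_third _ (by linarith)
  have hu3 : u ^ 3 = y := cube_rpow_third _ (le_of_lt hypos)
  have hv3 : v ^ 3 = x := cube_rpow_third _ (le_of_lt hxpos)
  have hm1 : 1 ≤ m := by
    have : (1:ℝ) ^ 3 ≤ m ^ 3 := by rw [hm3]; norm_num; linarith
    exact le_of_pow_le_pow_left₀ (by norm_num) (le_of_lt hm) this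
  -- rewrite η values
  have hηt : η t = k * m / v := by rw [hη t]
  have hηt1 : η (t - 1) = k * m / u := by
    rw [hη (t - 1), htc]
    have : (n:ℝ) + ((t:ℝ) - 1) = y := by simp only [hydef, hxdef]; ring
    rw [this]
  have hkm : 0 < k * m := mul_pos hk hm
  -- from hle : k * m ≤ v
  have hkmv : k * m ≤ v := by
    rw [hηt, div_le_one hv] at hle
    exact hle
  -- key inequality 1 : 3 u^2 (v - u) ≤ 1
  have key1 : 3 * u ^ 2 * (v - u) ≤ 1 := by
    have hvy : v ^ 3 = u ^ 3 + 1 := by rw [hv3, hu3]; simp [hydef]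
    nlinarith [mul_nonneg (sq_nonneg (u - v)) (by positivity : (0:ℝ) ≤ 2 * u + v)]
  -- key inequality 2 : v^2 ≤ 2 u^2
  have key2 : v ^ 2 ≤ 2 * u ^ 2 := by
    have h6 : (v ^ 2) ^ 3 ≤ (2 * u ^ 2) ^ 3 := by
      have hx2y : x ≤ 2 * y := by simp only [hydef]; linarith
      have : (v ^ 2) ^ 3 = x ^ 2 := by rw [← hv3]; ring
      rw [this]
      have : (2 * u ^ 2) ^ 3 = 8 * y ^ 2 := by rw [show (2 * u ^ 2) ^ 3 = 8 * (u ^ 3) ^ 2 by ring, hu3]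
      rw [this]
      nlinarith
    exact le_of_pow_le_pow_left₀ (by norm_num) (by positivity) h6
  -- C : k * v ≤ 2 * m^2 * u^2
  have C : k * v ≤ 2 * m ^ 2 * u ^ 2 := by
    refine le_of_mul_le_mul_right ?_ hm
    have A : k * v * m ≤ v ^ 2 := by
      nlinarith [mul_le_mul_of_nonneg_right hkmv hv.le]
    have hm3ge : 1 ≤ m ^ 3 := by rw [hm3]; linarith
    nlinarith [A, key2, mul_nonneg (by linarith : (0:ℝ) ≤ m ^ 3 - 1) (sq_nonneg u)]
  -- polynomial form of the goal
  have D : (v - u) * (3 * k ^ 3 * v) ≤ 2 * (k * m) * (k * m) := by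
    refine le_of_mul_le_mul_right ?_ (by positivity : (0:ℝ) < u ^ 2)
    have D1 : k ^ 3 * v * (3 * u ^ 2 * (v - u)) ≤ k ^ 3 * v * 1 :=
      mul_le_mul_of_nonneg_left key1 (by positivity)
    have D2 : k ^ 2 * (k * v) ≤ k ^ 2 * (2 * m ^ 2 * u ^ 2) :=
      mul_le_mul_of_nonneg_left C (by positivity)
    nlinarith [D1, D2]
  rw [hηt, hηt1]
  have h1 : 1 / (k * m / v) = v / (k * m) := by field_simp
  have h2 : 1 / (k * m / u) = u / (k * m) := by field_simp
  rw [h1, h2, div_sub_div_same]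
  have h3 : 2 / (3 * k ^ 3) * (k * m / v) = 2 * (k * m) / (3 * k ^ 3 * v) := by
    field_simp
  rw [h3, div_le_div_iff₀ hkm (by positivity)]
  nlinarith [D]
end
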